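/- arXiv:math/0309399 — 3 statements merged into one kernel-verified Lean document; each statement's English description precedes it below -/
import Mathlib

section
/- Let k be a field, t ≥ 1 and n_1,…,n_t ≥ 1 integers, and let S = k[z_0, z_{1,1},…,z_{n_1,1}, …, z_{1,t},…,z_{n_t,t}] be a polynomial ring. For each i = 1,…,t let I_{Π_i} ⊆ S be the ideal generated by all the variables of S except z_{1,i},…,z_{n_i,i}. Fix positive integers a_1,…,a_t and set a = a_1+⋯+a_t. Then the degree-a homogeneous component of the ideal I_{Π_1}^{a−a_1} ∩ ⋯ ∩ I_{Π_t}^{a−a_t} is spanned, as a k-vector space, by exactly those monomials of the form z_0^{a−s_1−⋯−s_t}·M_1⋯M_t, where for each i, M_i is a monomial of degree s_i in the variables z_{1,i},…,z_{n_i,i} with 0 ≤ s_i ≤ a_i. -/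
open MvPolynomial

noncomputable section

variable (k : Type) [Field k]

/-- Projective space with homogeneous coordinates indexed by `ι`. -/
abbrev Pr (ι : Type) : Type := Projectivization k (ι → k)

/-- The affine cone over a subset of projective space. -/
def pcone {ι : Type} (S : Set (Pr k ι)) : Set (ι → k) :=
  {v | ∃ hv : v ≠ 0, Projectivization.mk k v hv ∈ S} ∪ {0}

/-- The homogeneous vanishing ideal of a subset of projective space. -/
def projIdeal {ι : Type} (S : Set (Pr k ι)) : Ideal (MvPolynomial ι k) :=
  vanishingIdeal k (pcone k S)

/-- The Zariski closure of a subset of projective space. -/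
def zclosure {ι : Type} (S : Set (Pr k ι)) : Set (Pr k ι) :=
  {x | ∀ f ∈ projIdeal k S, ∀ (v : ι → k) (hv : v ≠ 0),
    Projectivization.mk k v hv = x → eval v f = 0}

/-- `X` has (projective) dimension `d`: the affine cone over `X` has Krull dimension `d + 1`. -/
def HasDim {ι : Type} (X : Set (Pr k ι)) (d : ℕ) : Prop :=
  ringKrullDim (MvPolynomial ι k ⧸ projIdeal k X) = ((d + 1 : ℕ) : WithBot (WithTop ℕ))

/-- The union of the linear spans of `s`-tuples of points of `X`. -/
def secantSet {ι : Type} (X : Set (Pr k ι)) (s : ℕ) : Set (Pr k ι) :=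
  {x | ∃ P : Fin s → Pr k ι, (∀ i, P i ∈ X) ∧
    ∃ (v : ι → k) (hv : v ≠ 0), x = Projectivization.mk k v hv ∧
      v ∈ Submodule.span k (Set.range fun i => (P i).rep)}

/-- The `s`-th higher secant variety `X^s` of `X`. -/
def secantVariety {ι : Type} (X : Set (Pr k ι)) (s : ℕ) : Set (Pr k ι) :=
  zclosure k (secantSet k X s)

/-- The set of (Plücker coordinates of) `m`-planes lying in the span of `s` points of `X`. -/
def grassSecantSet {ι : Type} (X : Set (Pr k ι)) (m s : ℕ) :
    Set (Pr k (Fin (m + 1) → ι)) :=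
  {x | ∃ P : Fin s → Pr k ι, (∀ i, P i ∈ X) ∧
    ∃ w : Fin (m + 1) → ι → k, LinearIndependent k w ∧
      (∀ j, w j ∈ Submodule.span k (Set.range fun i => (P i).rep)) ∧
      ∃ h, x = Projectivization.mk k
        (fun c => (Matrix.of fun i j => w i (c j)).det) h}

/-- The `(m, s-1)` Grassmann secant variety of `X`, in its Plücker embedding. -/
def grassSecantVariety {ι : Type} (X : Set (Pr k ι)) (m s : ℕ) :
    Set (Pr k (Fin (m + 1) → ι)) :=
  zclosure k (grassSecantSet k X m s)

/-- Index type for the coordinates of the Segre–Veronese embedding of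
`P^{n 0} × ⋯ × P^{n (t-1)}` in multidegree `a`: exponent vectors of multidegree `a`. -/
abbrev SVIdx (t : ℕ) (n a : Fin t → ℕ) : Type :=
  {d : (i : Fin t) → Fin (n i + 1) → ℕ // ∀ i, ∑ j, d i j = a i}

/-- The Segre–Veronese variety: image of `P^{n 0} × ⋯ × P^{n (t-1)}` under the embedding by
all monomials of multidegree `a`. -/
def segreVeronese (t : ℕ) (n a : Fin t → ℕ) : Set (Pr k (SVIdx t n a)) :=
  {x | ∃ v : (i : Fin t) → Fin (n i + 1) → k, (∀ i, v i ≠ 0) ∧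
    ∃ h, x = Projectivization.mk k (fun d => ∏ i, ∏ j, v i j ^ d.1 i j) h}

/-- Variables of the multihomogeneous coordinate ring of `P^{n 0} × ⋯ × P^{n (t-1)}`. -/
abbrev MPVar (t : ℕ) (n : Fin t → ℕ) : Type := Σ i : Fin t, Fin (n i + 1)

/-- The multigraded piece of multidegree `a` of the coordinate ring of multiprojective space:
the span of the monomials having degree `a i` in the `i`-th block of variables. -/
def multiHomog (t : ℕ) (n : Fin t → ℕ) (a : Fin t → ℕ) :
    Submodule k (MvPolynomial (MPVar t n) k) :=
  Submodule.span k {f | ∃ m : MPVar t n →₀ ℕ,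
    (∀ i, ∑ j, m ⟨i, j⟩ = a i) ∧ f = monomial m 1}

/-- The multihomogeneous (prime) ideal of a point of multiprojective space with
multihomogeneous coordinates `v`: generated by the multidegree-`(0,…,1,…,0)` forms
vanishing at `v`. -/
def mpPointIdeal (t : ℕ) (n : Fin t → ℕ) (v : (i : Fin t) → Fin (n i + 1) → k) :
    Ideal (MvPolynomial (MPVar t n) k) :=
  Ideal.span {f | (∃ i, f ∈ multiHomog k t n (Pi.single i 1)) ∧
    eval (fun p : MPVar t n => v p.1 p.2) f = 0}

/-- The homogeneous (prime) ideal of the point of projective space with homogeneous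
coordinates `v`: generated by the linear forms vanishing at `v`. -/
def pointIdeal {ι : Type} (v : ι → k) : Ideal (MvPolynomial ι k) :=
  Ideal.span {f | f ∈ homogeneousSubmodule ι k 1 ∧ eval v f = 0}

/-- The homogeneous ideal of a linear subspace of projective space, corresponding to the
linear subspace `W` of the underlying vector space: generated by the linear forms
vanishing on `W`. -/
def subspaceIdeal {ι : Type} (W : Submodule k (ι → k)) : Ideal (MvPolynomial ι k) :=
  Ideal.span {f | f ∈ homogeneousSubmodule ι k 1 ∧ ∀ w ∈ W, eval w f = 0}

/-- The degree-`d` graded piece of an ideal, as a `k`-vector space. -/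
def idealPiece {ι : Type} (I : Ideal (MvPolynomial ι k)) (d : ℕ) :
    Submodule k (MvPolynomial ι k) :=
  Submodule.restrictScalars k I ⊓ homogeneousSubmodule ι k d

/-- The multidegree-`a` graded piece of an ideal in the multihomogeneous coordinate ring,
as a `k`-vector space. -/
def mIdealPiece {t : ℕ} {n : Fin t → ℕ} (I : Ideal (MvPolynomial (MPVar t n) k))
    (a : Fin t → ℕ) : Submodule k (MvPolynomial (MPVar t n) k) :=
  Submodule.restrictScalars k I ⊓ multiHomog k t n a

/-- Variables `z_0, z_{j,i}` (`1 ≤ j ≤ n i`) of the coordinate ring of `P^n`,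
`n = n 0 + ⋯ + n (t-1)`. -/
abbrev TVar (t : ℕ) (n : Fin t → ℕ) : Type := Option (Σ i : Fin t, Fin (n i))

/-- The coordinates of the image, under the Multiprojective-Affine-Projective map `f`,
of the point of `P^{n 0} × ⋯ × P^{n (t-1)}` with multihomogeneous coordinates `v`. -/
def fMap (t : ℕ) (n : Fin t → ℕ) (v : (i : Fin t) → Fin (n i + 1) → k) : TVar t n → k
  | none => ∏ i, v i 0
  | some p => v p.1 p.2.succ * ∏ l ∈ Finset.univ.erase p.1, v l 0

/-- The ideal `I_{Π_i}` of the coordinate linear subspace `Π_i ≅ P^{n i − 1}` of `P^n`: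
generated by all the variables except `z_{1,i}, …, z_{n i,i}`. -/
def coordSubspaceIdeal (t : ℕ) (n : Fin t → ℕ) (i : Fin t) :
    Ideal (MvPolynomial (TVar t n) k) :=
  Ideal.span {f | ∃ v : TVar t n, (∀ j : Fin (n i), v ≠ some ⟨i, j⟩) ∧ f = X v}

/-- The image of `X × P^m` under the Segre embedding. -/
def segreImage (N m : ℕ) (X : Set (Pr k (Fin (N + 1)))) :
    Set (Pr k (Fin (N + 1) × Fin (m + 1))) :=
  {y | ∃ (v : Fin (N + 1) → k) (hv : v ≠ 0), Projectivization.mk k v hv ∈ X ∧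
    ∃ w : Fin (m + 1) → k, w ≠ 0 ∧
      ∃ h, y = Projectivization.mk k (fun p => v p.1 * w p.2) h}

end


open MvPolynomial Finsupp in
private lemma weight_eq_sum_univ' {ι : Type} [Fintype ι] (w : ι → ℕ) (m : ι →₀ ℕ) :
    Finsupp.weight w m = ∑ v : ι, m v * w v := by
  rw [Finsupp.weight_apply, Finsupp.sum_fintype]
  · simp [smul_eq_mul]
  · intro i; simp

open MvPolynomial Finsupp in
private lemma support_weight_ge_one_of_mem_span' {ι k : Type} [Field k] (w : ι → ℕ)
    (S : Set (MvPolynomial ι k)) (hS : ∀ g ∈ S, ∃ v, g = X v ∧ 1 ≤ w v)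
    (q : MvPolynomial ι k) (hq : q ∈ Ideal.span S) :
    ∀ m ∈ q.support, 1 ≤ Finsupp.weight w m := by
  classical
  induction hq using Submodule.span_induction with
  | mem g hg =>
      obtain ⟨v, rfl, hv⟩ := hS g hg
      intro m hm
      rw [MvPolynomial.support_X] at hm
      simp only [Finset.mem_singleton] at hm
      subst hm
      simpa [Finsupp.weight_apply, Finsupp.sum_single_index] using hv
  | zero => simp
  | add x y hx hy ihx ihy =>
      intro m hm
      rcases Finset.mem_union.1 (MvPolynomial.support_add hm) with h | h
      · exact ihx m h
      · exact ihy m h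
  | smul r q hq ih =>
      intro m hm
      rw [smul_eq_mul] at hm
      obtain ⟨m1, hm1, m2, hm2, rfl⟩ := Finset.mem_add.1 (MvPolynomial.support_mul _ _ hm)
      have := ih m2 hm2
      rw [map_add]
      omega

open MvPolynomial Finsupp in
private lemma support_weight_ge_of_mem_pow' {ι k : Type} [Field k] (w : ι → ℕ)
    (S : Set (MvPolynomial ι k)) (hS : ∀ g ∈ S, ∃ v, g = X v ∧ 1 ≤ w v) (e : ℕ) :
    ∀ f ∈ (Ideal.span S) ^ e, ∀ m ∈ f.support, e ≤ Finsupp.weight w m := by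
  classical
  induction e with
  | zero => intro f _ m _; exact Nat.zero_le _
  | succ e ih =>
      intro f hf
      rw [pow_succ] at hf
      refine Submodule.mul_induction_on hf ?_ ?_
      · intro p hp q hq m hm
        obtain ⟨m1, hm1, m2, hm2, rfl⟩ := Finset.mem_add.1 (MvPolynomial.support_mul _ _ hm)
        have h1 := ih p hp m1 hm1
        have h2 := support_weight_ge_one_of_mem_span' w S hS q hq m2 hm2
        rw [map_add]; omega
      · intro x y ihx ihy m hm
        rcases Finset.mem_union.1 (MvPolynomial.support_add hm) with h | h
        · exact ihx m h
        · exact ihy m h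

open MvPolynomial Finsupp in
private lemma monomial_mem_pow' {ι k : Type} [Field k] (w : ι → ℕ) (hw : ∀ v, w v ≤ 1)
    (S : Set (MvPolynomial ι k)) (hS : ∀ v, w v ≠ 0 → X v ∈ S) (e : ℕ) :
    ∀ (m : ι →₀ ℕ) (c : k), e ≤ Finsupp.weight w m → monomial m c ∈ (Ideal.span S) ^ e := by
  classical
  induction e with
  | zero => intro m c _; simp
  | succ e ih =>
      intro m c hwm
      have hpos : 0 < Finsupp.weight w m := lt_of_lt_of_le (Nat.succ_pos e) hwm
      have : ∃ v ∈ m.support, m v * w v ≠ 0 := by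
        by_contra h
        push_neg at h
        rw [Finsupp.weight_apply, Finsupp.sum] at hpos
        have : ∑ v ∈ m.support, m v • w v = 0 := Finset.sum_eq_zero (by
          intro v hv; simpa [smul_eq_mul] using h v hv)
        omega
      obtain ⟨v, hv, hvw⟩ := this
      obtain ⟨hm0, hw0⟩ := mul_ne_zero_iff.1 hvw
      have hmv : 1 ≤ m v := Nat.one_le_iff_ne_zero.2 hm0
      have hwv : w v = 1 := by have := hw v; omega
      set m' : ι →₀ ℕ := m - Finsupp.single v 1 with hm'
      have hsplit : m = Finsupp.single v 1 + m' := by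
        ext u
        by_cases hu : u = v
        · subst hu; simp [hm', Finsupp.single_apply]; omega
        · simp [hm', Finsupp.single_apply, Ne.symm hu, hu]
      have hweq : Finsupp.weight w m = 1 + Finsupp.weight w m' := by
        rw [hsplit, map_add]
        congr 1
        simp [Finsupp.weight_apply, Finsupp.sum_single_index, hwv]
      have hle : e ≤ Finsupp.weight w m' := by omega
      have : monomial m c = X v * monomial m' c := by
        rw [hsplit, X, monomial_mul, one_mul]
      rw [this, pow_succ']
      exact Submodule.mul_mem_mul (Ideal.subset_span (hS v hw0)) (ih m' c hle)


open MvPolynomial in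
/-- The Claim in the proof of Theorem 1.1: the degree-`a` homogeneous component of
`I_{Π_1}^{a−a_1} ∩ ⋯ ∩ I_{Π_t}^{a−a_t}` is spanned by the monomials
`z_0^{a−s_1−⋯−s_t}·M_1⋯M_t` with `M_i` a monomial of degree `s_i ≤ a_i` in the `i`-th
block of variables. -/
theorem statement_0 (k : Type) [Field k] (t : ℕ) (ht : 1 ≤ t)
    (n : Fin t → ℕ) (hn : ∀ i, 1 ≤ n i) (a : Fin t → ℕ) (ha : ∀ i, 1 ≤ a i) :
    Submodule.restrictScalars k
        ((⨅ i, (coordSubspaceIdeal k t n i) ^ ((∑ i, a i) - a i) :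
          Ideal (MvPolynomial (TVar t n) k)) :
            Submodule (MvPolynomial (TVar t n) k) (MvPolynomial (TVar t n) k)) ⊓
      homogeneousSubmodule (TVar t n) k (∑ i, a i)
    = Submodule.span k
        {f : MvPolynomial (TVar t n) k | ∃ m : TVar t n →₀ ℕ,
          (∀ i, (∑ j : Fin (n i), m (some ⟨i, j⟩)) ≤ a i) ∧
          m none = (∑ i, a i) - (∑ i, ∑ j : Fin (n i), m (some ⟨i, j⟩)) ∧
          f = monomial m 1} := by
  classical
  set A := ∑ i, a i with hA
  -- the weight function for block i
  set w : Fin t → TVar t n → ℕ := fun i v =>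
    Option.rec 1 (fun p => if p.1 = i then 0 else 1) v with hw
  have hwle : ∀ i v, w i v ≤ 1 := by
    rintro i (_ | ⟨l, j⟩)
    · simp [hw]
    · simp only [hw]; split <;> simp
  -- generating sets
  set S : Fin t → Set (MvPolynomial (TVar t n) k) := fun i =>
    {f | ∃ v : TVar t n, (∀ j : Fin (n i), v ≠ some ⟨i, j⟩) ∧ f = X v} with hSdef
  have hIdeal : ∀ i, coordSubspaceIdeal k t n i = Ideal.span (S i) := fun i => rfl
  have hS1 : ∀ i, ∀ g ∈ S i, ∃ v, g = X v ∧ 1 ≤ w i v := by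
    rintro i g ⟨v, hv, rfl⟩
    refine ⟨v, rfl, ?_⟩
    match v with
    | none => simp [hw]
    | some ⟨l, j⟩ =>
        have hli : l ≠ i := by
          intro h; subst h; exact hv j rfl
        simp [hw, hli]
  have hS2 : ∀ i, ∀ v, w i v ≠ 0 → X v ∈ S i := by
    rintro i (_ | ⟨l, j⟩) hv
    · exact ⟨none, fun j => by simp, rfl⟩
    · have hli : l ≠ i := by
        intro h; subst h; simp [hw] at hv
      exact ⟨some ⟨l, j⟩, fun j' => by simp [hli], rfl⟩
  -- weight computations
  have hwi : ∀ (i : Fin t) (m : TVar t n →₀ ℕ),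
      (Finsupp.weight (w i) m : ℕ)
        = m none + ∑ l ∈ Finset.univ.erase i, ∑ j, m (some ⟨l, j⟩) := by
    intro i m
    rw [weight_eq_sum_univ', Fintype.sum_option, ← Finset.univ_sigma_univ, Finset.sum_sigma]
    simp only [hw, mul_one]
    congr 1
    rw [← Finset.add_sum_erase _ (fun l => ∑ j, m (some ⟨l, j⟩) * (if l = i then 0 else 1))
      (Finset.mem_univ i)]
    have h0 : (∑ j : Fin (n i), m (some ⟨i, j⟩) * if (i : Fin t) = i then 0 else 1) = 0 := by simp
    rw [h0, zero_add]
    apply Finset.sum_congr rfl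
    intro l hl
    apply Finset.sum_congr rfl
    intro j _
    rw [if_neg (Finset.mem_erase.1 hl).1, mul_one]
  have hdeg1 : ∀ m : TVar t n →₀ ℕ,
      (Finsupp.weight (1 : TVar t n → ℕ) m : ℕ)
        = m none + ∑ l, ∑ j, m (some ⟨l, j⟩) := by
    intro m
    rw [weight_eq_sum_univ', Fintype.sum_option, ← Finset.univ_sigma_univ, Finset.sum_sigma]
    simp
  have hsplitA : ∀ i : Fin t, A = a i + ∑ l ∈ Finset.univ.erase i, a l := by
    intro i; rw [hA, ← Finset.add_sum_erase _ _ (Finset.mem_univ i)]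
  apply le_antisymm
  · rintro f hf
    obtain ⟨hf1, hf2⟩ := Submodule.mem_inf.1 hf
    rw [Submodule.restrictScalars_mem] at hf1
    have hgoal : ∀ m ∈ f.support, (monomial m (coeff m f) : MvPolynomial (TVar t n) k) ∈
        Submodule.span k
        {f : MvPolynomial (TVar t n) k | ∃ m : TVar t n →₀ ℕ,
          (∀ i, (∑ j : Fin (n i), m (some ⟨i, j⟩)) ≤ a i) ∧
          m none = A - (∑ i, ∑ j : Fin (n i), m (some ⟨i, j⟩)) ∧
          f = monomial m 1} := ?_
    · have hmem := Submodule.sum_mem _ hgoal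
      rwa [support_sum_monomial_coeff f] at hmem
    intro m hm
    have hcm : monomial m (coeff m f) = (coeff m f) • monomial m 1 := by
      rw [smul_monomial, smul_eq_mul, mul_one]
    rw [hcm]
    refine Submodule.smul_mem _ _ (Submodule.subset_span ?_)
    -- establish the numerical facts for m
    have hhom : (Finsupp.weight (1 : TVar t n → ℕ) m : ℕ) = A := by
      have := (mem_homogeneousSubmodule _ _).1 hf2 (mem_support_iff.1 hm)
      exact this
    rw [hdeg1] at hhom
    have hmem : ∀ i, A - a i ≤ m none + ∑ l ∈ Finset.univ.erase i, ∑ j, m (some ⟨l, j⟩) := by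
      intro i
      have hfi : f ∈ (Ideal.span (S i)) ^ (A - a i) := by
        have := (Submodule.mem_iInf _).1 hf1 i
        rwa [hIdeal i] at this
      have := support_weight_ge_of_mem_pow' (w i) (S i) (hS1 i) (A - a i) f hfi m hm
      rwa [hwi i m] at this
    refine ⟨m, ?_, ?_, rfl⟩
    · intro i
      have h1 := hmem i
      have h2 : ∑ l, ∑ j, m (some ⟨l, j⟩)
          = (∑ j, m (some ⟨i, j⟩)) + ∑ l ∈ Finset.univ.erase i, ∑ j, m (some ⟨l, j⟩) :=
        (Finset.add_sum_erase _ _ (Finset.mem_univ i)).symm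
      have h3 := hsplitA i
      omega
    · omega
  · rw [Submodule.span_le]
    rintro f ⟨m, hs, hnone, rfl⟩
    have hsum_le : ∑ l, ∑ j, m (some ⟨l, j⟩) ≤ A := by
      rw [hA]; exact Finset.sum_le_sum fun l _ => hs l
    refine Submodule.mem_inf.2 ⟨?_, ?_⟩
    · rw [Submodule.restrictScalars_mem]
      refine (Submodule.mem_iInf _).2 fun i => ?_
      rw [hIdeal i]
      refine monomial_mem_pow' (w i) (hwle i) (S i) (hS2 i) (A - a i) m 1 ?_
      rw [hwi i m]
      have h2 : ∑ l, ∑ j, m (some ⟨l, j⟩)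
          = (∑ j, m (some ⟨i, j⟩)) + ∑ l ∈ Finset.univ.erase i, ∑ j, m (some ⟨l, j⟩) :=
        (Finset.add_sum_erase _ _ (Finset.mem_univ i)).symm
      have h3 := hsplitA i
      have h4 := hs i
      omega
    · rw [mem_homogeneousSubmodule]
      refine isHomogeneous_monomial 1 ?_
      rw [Finsupp.degree_eq_weight_one, show (fun _ => 1 : TVar t n → ℕ) = 1 from rfl, hdeg1]
      omega
end

section
/- Let k be a field, t ≥ 1, n_1,…,n_t ≥ 1, n = n_1+⋯+n_t, and fix positive integers a_1,…,a_t with a = a_1+⋯+a_t. Let R = k[x_{0,1},…,x_{n_1,1}; … ; x_{0,t},…,x_{n_t,t}] be the multigraded coordinate ring of P^{n_1}×⋯×P^{n_t} and S = k[z_0, z_{1,1},…,z_{n_1,1}, …, z_{1,t},…,z_{n_t,t}] the coordinate ring of P^n. Let f be the birational map from P^{n_1}×⋯×P^{n_t} to P^n defined on the open chart {x_{0,1}x_{0,2}⋯x_{0,t} ≠ 0} by sending ((x_{0,1}:⋯:x_{n_1,1}),…,(x_{0,t}:⋯:x_{n_t,t})) to the point with z_0-coordinate x_{0,1}⋯x_{0,t}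 and z_{j,i}-coordinate x_{0,1}⋯x_{0,i−1}·x_{j,i}·x_{0,i+1}⋯x_{0,t}. For each i let I_{Π_i} ⊆ S be the ideal generated by all variables except z_{1,i},…,z_{n_i,i}. Let R_1,…,R_s be points of P^{n_1}×⋯×P^{n_t} lying in the chart {x_{0,1}⋯x_{0,t} ≠ 0}, let m_1,…,m_s be positive integers, let I_Z = ℘_{R_1}^{m_1} ∩ ⋯ ∩ ℘_{R_s}^{m_s} ⊆ R (where ℘_{R_j} is the multihomogeneous prime ideal of R_j), and let I_W = ℘_{f(R_1)}^{m_1} ∩ ⋯ ∩ ℘_{f(R_s)}^{m_s} ∩ I_{Π_1}^{a−a_1} ∩ ⋯ ∩ I_{Π_t}^{a−a_t} ⊆ S (where ℘_{f(R_j)} is the homogeneous prime ideal of f(R_j)). Then dim_k (I_W)_a = dim_k (I_Z)_{(a_1,…,a_t)}. -/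
open MvPolynomial

set_option linter.unusedSectionVars false

namespace Stmt1Aux
variable {k : Type} [Field k]

section Gen
variable {σ : Type} [Fintype σ] [DecidableEq σ]

/-- degree of an exponent vector in the variables satisfying `P` -/
def pdeg (P : σ → Prop) [DecidablePred P] (e : σ →₀ ℕ) : ℕ :=
  ∑ u ∈ Finset.univ.filter P, e u

lemma pdeg_add (P : σ → Prop) [DecidablePred P] (e e' : σ →₀ ℕ) :
    pdeg P (e + e') = pdeg P e + pdeg P e' := by
  simp [pdeg, Finset.sum_add_distrib]

lemma pdeg_single (P : σ → Prop) [DecidablePred P] (u : σ) (c : ℕ) :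
    pdeg P (Finsupp.single u c) = if P u then c else 0 := by
  classical
  simp only [pdeg, Finsupp.single_apply]
  rw [Finset.sum_ite_eq (Finset.univ.filter P) u (fun _ => c)]
  simp [Finset.mem_filter]

/-- the ideal of polynomials all of whose monomials have degree at least `m`
in the variables satisfying `P` -/
def pdegIdeal (P : σ → Prop) [DecidablePred P] (m : ℕ) : Ideal (MvPolynomial σ k) where
  carrier := {F | ∀ e ∈ F.support, m ≤ pdeg P e}
  zero_mem' := by simp
  add_mem' := by
    intro p q hp hq e he
    rcases Finset.mem_union.mp (Finsupp.support_add he) with h | h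
    · exact hp e h
    · exact hq e h
  smul_mem' := by
    intro c F hF e he
    rw [smul_eq_mul] at he
    have := MvPolynomial.support_mul c F he
    rw [Finset.mem_add] at this
    obtain ⟨d1, hd1, d2, hd2, rfl⟩ := this
    rw [pdeg_add]
    exact le_add_self.trans (Nat.add_le_add_left (hF d2 hd2) _)

lemma monomial_mem_span_X_pow (P : σ → Prop) [DecidablePred P] (m : ℕ) :
    ∀ (e : σ →₀ ℕ), m ≤ pdeg P e → ∀ c : k,
      monomial e c ∈ (Ideal.span (MvPolynomial.X '' {u | P u}) : Ideal (MvPolynomial σ k)) ^ m := by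
  induction m with
  | zero => intro e he c; simp [Ideal.one_eq_top]
  | succ m ih =>
    intro e he c
    have hne : pdeg P e ≠ 0 := by omega
    obtain ⟨u, hu, hcu⟩ := Finset.exists_ne_zero_of_sum_ne_zero hne
    rw [Finset.mem_filter] at hu
    have heu : 1 ≤ e u := Nat.one_le_iff_ne_zero.mpr hcu
    set e' : σ →₀ ℕ := e - Finsupp.single u 1 with he'
    have hee : e = Finsupp.single u 1 + e' := by
      ext w
      simp only [Finsupp.add_apply, Finsupp.tsub_apply, he', Finsupp.single_apply]
      by_cases h : u = w
      · subst h; rw [if_pos rfl]; omega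
      · simp [h]
    have hdeco : (monomial e c : MvPolynomial σ k) = X u * monomial e' c := by
      rw [MvPolynomial.X, monomial_mul, one_mul, ← hee]
    have hpe' : m ≤ pdeg P e' := by
      have := pdeg_add P (Finsupp.single u 1) e'
      rw [← hee, pdeg_single, if_pos hu.2] at this
      omega
    rw [hdeco, pow_succ']
    exact Ideal.mul_mem_mul (Ideal.subset_span ⟨u, hu.2, rfl⟩) (ih e' hpe' c)

theorem mem_span_X_pow_iff (P : σ → Prop) [DecidablePred P] (m : ℕ) (F : MvPolynomial σ k) :
    F ∈ (Ideal.span (MvPolynomial.X '' {u | P u}) : Ideal (MvPolynomial σ k)) ^ m ↔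
      ∀ e ∈ F.support, m ≤ pdeg P e := by
  constructor
  · intro hF
    have key : ∀ q : ℕ, (Ideal.span (MvPolynomial.X '' {u | P u}) : Ideal (MvPolynomial σ k)) ^ q ≤
        pdegIdeal P q := by
      intro q
      induction q with
      | zero => intro F _ e _; exact Nat.zero_le _
      | succ q ihq =>
        rw [pow_succ]
        refine Ideal.mul_le.mpr fun f hf g hg => ?_
        intro e he
        have := MvPolynomial.support_mul f g he
        rw [Finset.mem_add] at this
        obtain ⟨d1, hd1, d2, hd2, rfl⟩ := this
        have h1 : q ≤ pdeg P d1 := ihq hf d1 hd1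
        have h2 : 1 ≤ pdeg P d2 := by
          have hg' : g ∈ Ideal.span (MvPolynomial.X '' {u | P u}) := hg
          have : Ideal.span (MvPolynomial.X '' {u | P u}) ≤ (pdegIdeal P 1 : Ideal (MvPolynomial σ k)) := by
            rw [Ideal.span_le]
            rintro _ ⟨u, hu, rfl⟩ d hd
            rw [MvPolynomial.support_X] at hd
            rw [Finset.mem_singleton] at hd
            subst hd
            simp only [Set.mem_setOf_eq] at hu
            rw [pdeg_single, if_pos hu]
          exact this hg' d2 hd2
        rw [pdeg_add]; omega
    exact key m hF
  · intro h
    rw [← MvPolynomial.support_sum_monomial_coeff F]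
    exact Submodule.sum_mem _ fun e he => monomial_mem_span_X_pow P m e (h e he) _

end Gen
variable {k : Type} [Field k]

section Gen2
variable {σ : Type} [Fintype σ] [DecidableEq σ]

lemma mem_homog_iff (q : ℕ) (F : MvPolynomial σ k) :
    F ∈ homogeneousSubmodule σ k q ↔ ∀ e ∈ F.support, ∑ u, e u = q := by
  rw [mem_homogeneousSubmodule]
  have key : ∀ e : σ →₀ ℕ, (Finsupp.weight 1) e = ∑ u, e u := by
    intro e
    rw [Finsupp.weight_apply, Finsupp.sum_fintype]
    · simp
    · simp
  constructor
  · intro h e he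
    rw [← key e]
    exact h (MvPolynomial.mem_support_iff.mp he)
  · intro h d hd
    rw [key d]
    exact h d (MvPolynomial.mem_support_iff.mpr hd)

lemma sum_eq_one_exists {κ : Type} [DecidableEq κ] (s : Finset κ) (f : κ → ℕ)
    (h : ∑ x ∈ s, f x = 1) :
    ∃ u ∈ s, f u = 1 ∧ ∀ x ∈ s, x ≠ u → f x = 0 := by
  obtain ⟨u, hu, hcu⟩ := Finset.exists_ne_zero_of_sum_ne_zero (h ▸ one_ne_zero)
  have hsplit := Finset.add_sum_erase s f hu
  rw [h] at hsplit
  have hfu : f u = 1 := by omega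
  have hrest : ∑ x ∈ s.erase u, f x = 0 := by omega
  refine ⟨u, hu, hfu, fun x hx hxu => ?_⟩
  exact (Finset.sum_eq_zero_iff).mp hrest x (Finset.mem_erase.mpr ⟨hxu, hx⟩)

lemma linear_rep {f : MvPolynomial σ k}
    (h : ∀ d ∈ f.support, ∃ u : σ, d = Finsupp.single u 1) :
    f = ∑ u : σ, monomial (Finsupp.single u 1) (coeff (Finsupp.single u 1) f) := by
  apply MvPolynomial.ext
  intro d
  rw [MvPolynomial.coeff_sum]
  by_cases hd : ∃ u : σ, d = Finsupp.single u 1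
  · obtain ⟨u₀, rfl⟩ := hd
    rw [Finset.sum_eq_single u₀]
    · rw [coeff_monomial, if_pos rfl]
    · intro u _ hne
      rw [coeff_monomial, if_neg]
      intro hc
      exact hne (Finsupp.single_left_injective (one_ne_zero) hc)
    · intro hmem; exact absurd (Finset.mem_univ u₀) hmem
  · push_neg at hd
    have h0 : coeff d f = 0 := by
      by_contra hc
      obtain ⟨u, hu⟩ := h d (MvPolynomial.mem_support_iff.mpr hc)
      exact hd u hu
    rw [h0]
    symm
    apply Finset.sum_eq_zero
    intro u _
    rw [coeff_monomial, if_neg fun hc => hd u hc.symm]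

lemma homog_one_support {f : MvPolynomial σ k}
    (hf : f ∈ homogeneousSubmodule σ k 1) :
    ∀ d ∈ f.support, ∃ u : σ, d = Finsupp.single u 1 := by
  intro d hd
  have hsum := (mem_homog_iff 1 f).mp hf d hd
  obtain ⟨u, _, h1, h0⟩ := sum_eq_one_exists Finset.univ (fun u => d u) hsum
  refine ⟨u, ?_⟩
  ext w
  rcases eq_or_ne w u with rfl | hw
  · rw [h1, Finsupp.single_apply, if_pos rfl]
  · rw [h0 w (Finset.mem_univ w) hw, Finsupp.single_apply, if_neg (fun hc => hw hc.symm)]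

lemma sum_filter_ne_none {β : Type} [Fintype β] [DecidableEq β] (e : Option β → ℕ) :
    ∑ u ∈ Finset.univ.filter (· ≠ none), e u = ∑ b : β, e (some b) := by
  classical
  have h1 := Finset.sum_filter_add_sum_filter_not Finset.univ (· = (none : Option β)) e
  have h2 : Finset.univ.filter (· = (none : Option β)) = {none} := by
    ext u; simp
  rw [h2, Finset.sum_singleton] at h1
  have h3 : ∑ u : Option β, e u = e none + ∑ b : β, e (some b) := Fintype.sum_option e
  simp only [ne_eq]
  omega

lemma sum_filter_ne_zero {nn : ℕ} (g : Fin (nn+1) → ℕ) :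
    ∑ j ∈ Finset.univ.filter (· ≠ 0), g j = ∑ j : Fin nn, g j.succ := by
  classical
  have h1 := Finset.sum_filter_add_sum_filter_not Finset.univ (· = (0 : Fin (nn+1))) g
  have h2 : Finset.univ.filter (· = (0 : Fin (nn+1))) = {0} := by ext u; simp
  rw [h2, Finset.sum_singleton] at h1
  have h3 := Fin.sum_univ_succ g
  simp only [ne_eq]
  omega

end Gen2

section TN
variable {t : ℕ} {n : Fin t → ℕ}

lemma sum_single_block (p : MPVar t n) (c : ℕ) (i : Fin t) :
    ∑ j, (Finsupp.single p c) ⟨i, j⟩ = if p.1 = i then c else 0 := by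
  obtain ⟨l, j'⟩ := p
  by_cases hli : l = i
  · subst hli
    rw [if_pos rfl]
    simp only [Finsupp.single_apply]
    have hcond : ∀ j : Fin (n l + 1), ((⟨l, j'⟩ : MPVar t n) = ⟨l, j⟩) ↔ j' = j := by
      intro j
      constructor
      · intro h; exact eq_of_heq (Sigma.mk.inj_iff.mp h).2
      · rintro rfl; rfl
    calc ∑ j, (if (⟨l, j'⟩ : MPVar t n) = ⟨l, j⟩ then c else 0)
        = ∑ j, (if j' = j then c else 0) :=
          Finset.sum_congr rfl fun j _ => if_congr (hcond j) rfl rfl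
      _ = if j' ∈ Finset.univ then c else 0 := Finset.sum_ite_eq Finset.univ j' fun _ => c
      _ = c := by simp
  · rw [if_neg hli]
    apply Finset.sum_eq_zero
    intro j _
    rw [Finsupp.single_apply, if_neg]
    intro h
    exact hli (Sigma.mk.inj_iff.mp h).1

lemma mem_multiHomog_iff (a : Fin t → ℕ) (G : MvPolynomial (MPVar t n) k) :
    G ∈ multiHomog k t n a ↔ ∀ d ∈ G.support, ∀ i, ∑ j, d ⟨i, j⟩ = a i := by
  classical
  constructor
  · intro hG
    let MH : Submodule k (MvPolynomial (MPVar t n) k) :=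
      { carrier := {G | ∀ d ∈ G.support, ∀ i, ∑ j, d ⟨i, j⟩ = a i}
        zero_mem' := by simp
        add_mem' := by
          intro p q hp hq d hd i
          rcases Finset.mem_union.mp (Finsupp.support_add hd) with h | h
          · exact hp d h i
          · exact hq d h i
        smul_mem' := by
          intro c G hG d hd i
          exact hG d (Finsupp.support_smul hd) i }
    have hle : multiHomog k t n a ≤ MH := Submodule.span_le.mpr (by
      rintro f ⟨mm, hmm, rfl⟩ d hd i
      rw [MvPolynomial.support_monomial, if_neg (one_ne_zero)] at hd
      rw [Finset.mem_singleton] at hd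
      subst hd
      exact hmm i)
    exact hle hG
  · intro h
    rw [← MvPolynomial.support_sum_monomial_coeff G]
    apply Submodule.sum_mem
    intro d hd
    have hsm : (monomial d (coeff d G) : MvPolynomial _ k) = (coeff d G) • monomial d 1 := by
      rw [MvPolynomial.smul_monomial, smul_eq_mul, mul_one]
    rw [hsm]
    exact Submodule.smul_mem _ _ (Submodule.subset_span ⟨d, fun i => h d hd i, rfl⟩)

lemma multiHomog_single_support (i : Fin t) {f : MvPolynomial (MPVar t n) k}
    (hf : f ∈ multiHomog k t n (Pi.single i 1)) :
    ∀ d ∈ f.support, ∃ j : Fin (n i + 1), d = Finsupp.single ⟨i, j⟩ 1 := by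
  intro d hd
  have hblock := (mem_multiHomog_iff _ _).mp hf d hd
  have hi : ∑ j, d ⟨i, j⟩ = 1 := by rw [hblock i, Pi.single_eq_same]
  obtain ⟨j₀, _, hj1, hj0⟩ := sum_eq_one_exists Finset.univ (fun j => d ⟨i, j⟩) hi
  refine ⟨j₀, ?_⟩
  ext ⟨l, j⟩
  by_cases hli : l = i
  · subst hli
    by_cases hjj : j = j₀
    · subst hjj; rw [hj1, Finsupp.single_apply, if_pos rfl]
    · rw [hj0 j (Finset.mem_univ j) hjj, Finsupp.single_apply, if_neg]
      intro hc
      exact hjj (eq_of_heq (Sigma.mk.inj_iff.mp hc).2).symm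
  · have hz : ∑ j', d ⟨l, j'⟩ = 0 := by
      rw [hblock l, Pi.single_eq_of_ne hli]
    rw [Finset.sum_eq_zero_iff.mp hz j (Finset.mem_univ j), Finsupp.single_apply, if_neg]
    intro hc
    exact hli (Sigma.mk.inj_iff.mp hc).1.symm

/-- exponent of the monomial to which the variable `u` is sent by the map `f` -/
noncomputable def Eexp : TVar t n → (MPVar t n →₀ ℕ)
  | none => ∑ i, Finsupp.single ⟨i, 0⟩ 1
  | some p => Finsupp.single ⟨p.1, p.2.succ⟩ 1 +
      ∑ l ∈ Finset.univ.erase p.1, Finsupp.single ⟨l, 0⟩ 1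

/-- the multi-exponent of the image of a monomial with exponent `e` -/
noncomputable def Texp (e : TVar t n →₀ ℕ) : MPVar t n →₀ ℕ :=
  e.sum fun u c => c • Eexp u

/-- the Multiprojective-Affine-Projective map on coordinate rings -/
noncomputable def phi : MvPolynomial (TVar t n) k →ₐ[k] MvPolynomial (MPVar t n) k :=
  aeval (fun u => monomial (Eexp u) 1)

lemma prod_monomial {σ' : Type} {α : Type} (s : Finset α) (f : α → (σ' →₀ ℕ)) :
    ∏ x ∈ s, (monomial (f x) (1:k)) = monomial (∑ x ∈ s, f x) 1 := by
  classical
  induction s using Finset.cons_induction with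
  | empty => simp [MvPolynomial.monomial_zero']
  | cons a s ha ih =>
    rw [Finset.prod_cons, Finset.sum_cons, ih, MvPolynomial.monomial_mul, one_mul]

lemma phi_monomial (e : TVar t n →₀ ℕ) (c : k) :
    phi (k := k) (monomial e c) = monomial (Texp e) c := by
  rw [phi, aeval_monomial]
  have h1 : (e.prod fun u c' => (monomial (Eexp u) (1:k))^c') = monomial (Texp e) 1 := by
    rw [Finsupp.prod]
    rw [Finset.prod_congr rfl (fun u _ => by
      rw [MvPolynomial.monomial_pow, one_pow] :
        ∀ u ∈ e.support, (monomial (Eexp u) (1:k))^ e u = monomial (e u • Eexp u) 1)]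
    rw [prod_monomial]
    rfl
  rw [h1, MvPolynomial.algebraMap_eq, C_mul_monomial, mul_one]

lemma phi_apply (F : MvPolynomial (TVar t n) k) :
    phi (k := k) F = AddMonoidAlgebra.mapDomain Texp F := by
  induction F using MvPolynomial.induction_on' with
  | monomial e c =>
    rw [phi_monomial, ← MvPolynomial.single_eq_monomial, ← MvPolynomial.single_eq_monomial,
      AddMonoidAlgebra.mapDomain_single]
  | add p q hp hq => rw [map_add, hp, hq, AddMonoidAlgebra.mapDomain_add]

lemma Eexp_apply_succ (u : TVar t n) (i : Fin t) (j : Fin (n i)) :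
    Eexp u ⟨i, j.succ⟩ = if u = some ⟨i, j⟩ then 1 else 0 := by
  have hnz : ∀ l : Fin t, ((⟨l, 0⟩ : MPVar t n) ≠ ⟨i, j.succ⟩) := by
    intro l hc
    obtain ⟨hl, hj⟩ := Sigma.mk.inj_iff.mp hc
    subst hl
    exact (Fin.succ_ne_zero j) (eq_of_heq hj).symm
  cases u with
  | none =>
    rw [if_neg (by simp)]
    rw [show Eexp (none : TVar t n) = ∑ l, Finsupp.single ⟨l,0⟩ 1 from rfl]
    rw [Finsupp.finset_sum_apply]
    apply Finset.sum_eq_zero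
    intro l _
    rw [Finsupp.single_apply, if_neg (hnz l)]
  | some p =>
    obtain ⟨l', j'⟩ := p
    rw [show Eexp (some ⟨l', j'⟩ : TVar t n) = Finsupp.single ⟨l', j'.succ⟩ 1 +
      ∑ l ∈ Finset.univ.erase l', Finsupp.single ⟨l,0⟩ 1 from rfl]
    rw [Finsupp.add_apply, Finsupp.finset_sum_apply]
    rw [Finset.sum_eq_zero (fun l _ => by rw [Finsupp.single_apply, if_neg (hnz l)]), add_zero]
    rw [Finsupp.single_apply]
    by_cases hli : l' = i
    · subst hli
      by_cases hjj : j' = j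
      · subst hjj; rw [if_pos rfl, if_pos rfl]
      · rw [if_neg, if_neg]
        · intro hc
          obtain ⟨-, h2⟩ := Sigma.mk.inj_iff.mp (Option.some.inj hc)
          exact hjj (eq_of_heq h2)
        · intro hc
          obtain ⟨-, h2⟩ := Sigma.mk.inj_iff.mp hc
          exact hjj (Fin.succ_inj.mp (eq_of_heq h2))
    · rw [if_neg, if_neg]
      · intro hc
        exact hli (Sigma.mk.inj_iff.mp (Option.some.inj hc)).1
      · intro hc
        exact hli (Sigma.mk.inj_iff.mp hc).1

lemma Texp_apply_succ (e : TVar t n →₀ ℕ) (i : Fin t) (j : Fin (n i)) :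
    Texp e ⟨i, j.succ⟩ = e (some ⟨i, j⟩) := by
  classical
  rw [Texp, Finsupp.sum_apply]
  have h1 : ∀ u ∈ e.support, (e u • Eexp u) ⟨i, j.succ⟩
      = if u = some ⟨i,j⟩ then e u else 0 := by
    intro u _
    rw [Finsupp.smul_apply, Eexp_apply_succ, smul_eq_mul, mul_ite, mul_one, mul_zero]
  rw [Finsupp.sum_congr (g2 := fun u c => if u = some ⟨i,j⟩ then c else 0) h1]
  exact Finsupp.sum_ite_self_eq' e (some ⟨i,j⟩)

lemma Eexp_block_sum (u : TVar t n) (i : Fin t) : ∑ j, Eexp u ⟨i, j⟩ = 1 := by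
  classical
  cases u with
  | none =>
    rw [show Eexp (none : TVar t n) = ∑ l, Finsupp.single ⟨l,0⟩ 1 from rfl]
    rw [Finset.sum_congr rfl fun j _ => Finsupp.finset_sum_apply _ _ _]
    rw [Finset.sum_comm]
    rw [Finset.sum_congr rfl fun l _ => sum_single_block ⟨l,0⟩ 1 i]
    rw [Finset.sum_ite_eq' Finset.univ i fun _ => 1]
    simp
  | some p =>
    obtain ⟨l', j'⟩ := p
    rw [show Eexp (some ⟨l', j'⟩ : TVar t n) = Finsupp.single ⟨l', j'.succ⟩ 1 +
      ∑ l ∈ Finset.univ.erase l', Finsupp.single ⟨l,0⟩ 1 from rfl]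
    rw [Finset.sum_congr rfl fun j _ => Finsupp.add_apply _ _ _]
    rw [Finset.sum_add_distrib]
    rw [sum_single_block ⟨l', j'.succ⟩ 1 i]
    rw [Finset.sum_congr rfl fun j _ => Finsupp.finset_sum_apply _ _ _]
    rw [Finset.sum_comm]
    rw [Finset.sum_congr rfl fun l _ => sum_single_block ⟨l,0⟩ 1 i]
    rw [Finset.sum_ite_eq' (Finset.univ.erase l') i fun _ => 1]
    by_cases hli : l' = i
    · rw [if_pos hli, if_neg (by simp [hli])]
      omega
    · rw [if_neg hli, if_pos (Finset.mem_erase.mpr ⟨Ne.symm hli, Finset.mem_univ i⟩)]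

lemma Texp_block_sum (e : TVar t n →₀ ℕ) (i : Fin t) :
    ∑ j, Texp e ⟨i, j⟩ = ∑ u, e u := by
  classical
  rw [Finset.sum_congr rfl fun j _ => (by rw [Texp, Finsupp.sum_apply] :
    Texp e ⟨i,j⟩ = e.sum fun u c => (c • Eexp u) ⟨i,j⟩)]
  simp only [Finsupp.sum]
  rw [Finset.sum_comm]
  have h1 : ∀ u ∈ e.support, ∑ j, (e u • Eexp u) ⟨i, j⟩ = e u := by
    intro u _
    rw [Finset.sum_congr rfl fun j _ => Finsupp.smul_apply _ _ _]
    simp only [smul_eq_mul]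
    rw [← Finset.mul_sum, Eexp_block_sum, mul_one]
  rw [Finset.sum_congr rfl h1]
  exact Finset.sum_subset (Finset.subset_univ _)
    (fun u _ hu => Finsupp.notMem_support_iff.mp hu)

lemma Texp_injective (ht : 1 ≤ t) :
    Function.Injective (Texp (t := t) (n := n)) := by
  intro e e' h
  have hsome : ∀ p : Σ i : Fin t, Fin (n i), e (some p) = e' (some p) := by
    rintro ⟨i, j⟩
    rw [← Texp_apply_succ e i j, ← Texp_apply_succ e' i j, h]
  have hD : ∑ u, e u = ∑ u, e' u := by
    have i₀ : Fin t := ⟨0, ht⟩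
    rw [← Texp_block_sum e i₀, ← Texp_block_sum e' i₀, h]
  have hS : ∑ p : Σ i : Fin t, Fin (n i), e (some p)
      = ∑ p : Σ i : Fin t, Fin (n i), e' (some p) :=
    Finset.sum_congr rfl fun p _ => hsome p
  have h3 : e none + ∑ p : Σ i : Fin t, Fin (n i), e (some p)
      = e' none + ∑ p : Σ i : Fin t, Fin (n i), e' (some p) := by
    rw [← Fintype.sum_option (fun u => e u), ← Fintype.sum_option (fun u => e' u)]
    exact hD
  have hnone : e none = e' none := by omega
  ext u
  cases u with
  | none => exact hnone
  | some p => exact hsome p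

lemma phi_injective (ht : 1 ≤ t) :
    Function.Injective (phi (k := k) (t := t) (n := n)) := by
  intro F G h
  exact AddMonoidAlgebra.mapDomain_injective (Texp_injective ht)
    (by rw [← phi_apply, ← phi_apply, h])

lemma phi_support (ht : 1 ≤ t) (F : MvPolynomial (TVar t n) k) :
    (phi (k := k) F).support = F.support.image Texp := by
  classical
  rw [phi_apply]
  exact Finsupp.mapDomain_support_of_injective (Texp_injective ht) (AddMonoidAlgebra.coeff F)

lemma monomial_one_mul {σ' : Type} (m : σ' →₀ ℕ) (G : MvPolynomial σ' k) :
    monomial m (1:k) * G = AddMonoidAlgebra.mapDomain (fun d => m + d) G := by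
  induction G using MvPolynomial.induction_on' with
  | monomial e c =>
    rw [MvPolynomial.monomial_mul, one_mul, ← MvPolynomial.single_eq_monomial,
      ← MvPolynomial.single_eq_monomial, AddMonoidAlgebra.mapDomain_single]
  | add p q hp hq => rw [mul_add, hp, hq, AddMonoidAlgebra.mapDomain_add]

lemma monomial_one_mul_support {σ' : Type} [DecidableEq σ'] (m : σ' →₀ ℕ)
    (G : MvPolynomial σ' k) :
    (monomial m (1:k) * G).support = G.support.image (fun d => m + d) := by
  rw [monomial_one_mul]
  exact Finsupp.mapDomain_support_of_injective (add_right_injective m) (AddMonoidAlgebra.coeff G)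

lemma mk_zero_eq_iff {l i : Fin t} : ((⟨l,0⟩ : MPVar t n) = ⟨i,0⟩) ↔ l = i :=
  ⟨fun h => (Sigma.mk.inj_iff.mp h).1, by rintro rfl; rfl⟩

/-- exponent of the monomial `z_{0,1}^{a-a_1} ⋯ z_{0,t}^{a-a_t}` -/
noncomputable def Mexp (a : Fin t → ℕ) : MPVar t n →₀ ℕ :=
  ∑ i, Finsupp.single ⟨i, 0⟩ ((∑ l, a l) - a i)

lemma Mexp_apply_zero (a : Fin t → ℕ) (i : Fin t) :
    Mexp (n := n) a ⟨i, 0⟩ = (∑ l, a l) - a i := by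
  classical
  rw [Mexp, Finsupp.finset_sum_apply]
  rw [Finset.sum_congr rfl (fun l _ => by
    rw [Finsupp.single_apply, if_congr (mk_zero_eq_iff (n := n)) rfl rfl] :
      ∀ l ∈ Finset.univ, (Finsupp.single (⟨l,0⟩ : MPVar t n) ((∑ l', a l') - a l)) ⟨i, 0⟩
        = if l = i then (∑ l', a l') - a l else 0)]
  rw [Finset.sum_ite_eq' Finset.univ i fun l => (∑ l', a l') - a l]
  simp

lemma Mexp_apply_succ (a : Fin t → ℕ) (i : Fin t) (j : Fin (n i)) :
    Mexp (n := n) a ⟨i, j.succ⟩ = 0 := by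
  classical
  rw [Mexp, Finsupp.finset_sum_apply]
  apply Finset.sum_eq_zero
  intro l _
  rw [Finsupp.single_apply, if_neg]
  intro hc
  obtain ⟨hl, hj⟩ := Sigma.mk.inj_iff.mp hc
  subst hl
  exact (Fin.succ_ne_zero j) (eq_of_heq hj).symm

lemma pdeg_ne_none (e : TVar t n →₀ ℕ) :
    pdeg (fun u : TVar t n => u ≠ none) e = ∑ p : Σ i : Fin t, Fin (n i), e (some p) :=
  sum_filter_ne_none (fun u => e u)

lemma sum_some_sigma (e : TVar t n →₀ ℕ) :
    ∑ p : Σ i : Fin t, Fin (n i), e (some p) = ∑ i, ∑ j : Fin (n i), e (some ⟨i, j⟩) := by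
  rw [← Finset.univ_sigma_univ, Finset.sum_sigma]

lemma pdeg_snd_ne_zero (d : MPVar t n →₀ ℕ) :
    pdeg (fun p : MPVar t n => p.2 ≠ 0) d = ∑ i, ∑ j : Fin (n i), d ⟨i, j.succ⟩ := by
  classical
  rw [pdeg]
  have h1 : (Finset.univ : Finset (MPVar t n)).filter (fun p => p.2 ≠ 0)
      = (Finset.univ : Finset (Fin t)).sigma (fun i => Finset.univ.filter (· ≠ 0)) := by
    ext ⟨i, j⟩
    simp [Finset.mem_sigma]
  rw [h1, Finset.sum_sigma]
  exact Finset.sum_congr rfl fun i _ => sum_filter_ne_zero (fun j => d ⟨i, j⟩)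

lemma pdeg_Wi (i : Fin t) (e : TVar t n →₀ ℕ) :
    pdeg (fun u : TVar t n => ∀ j : Fin (n i), u ≠ some ⟨i, j⟩) e
      + ∑ j : Fin (n i), e (some ⟨i, j⟩) = ∑ u, e u := by
  classical
  rw [pdeg]
  have h2 : Finset.univ.filter (fun u : TVar t n => ¬ ∀ j : Fin (n i), u ≠ some ⟨i,j⟩)
      = Finset.univ.image (fun j : Fin (n i) => (some ⟨i,j⟩ : TVar t n)) := by
    ext u
    simp only [Finset.mem_filter, Finset.mem_univ, true_and, Finset.mem_image]
    push_neg
    constructor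
    · rintro ⟨j, hj⟩; exact ⟨j, hj.symm⟩
    · rintro ⟨j, hj⟩; exact ⟨j, hj.symm⟩
  have h3 : ∑ u ∈ Finset.univ.image (fun j : Fin (n i) => (some ⟨i,j⟩ : TVar t n)), e u
      = ∑ j : Fin (n i), e (some ⟨i,j⟩) := by
    rw [Finset.sum_image]
    intro x _ y _ hxy
    exact eq_of_heq (Sigma.mk.inj_iff.mp (Option.some.inj hxy)).2
  rw [← h3, ← h2]
  exact Finset.sum_filter_add_sum_filter_not Finset.univ _ _

/-- substitution `z_u ↦ z_u + c_u z_0` on the `P^n` side -/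
noncomputable def subS (c : (i : Fin t) → Fin (n i) → k) :
    TVar t n → MvPolynomial (TVar t n) k
  | none => X none
  | some p => X (some p) + C (c p.1 p.2) * X none

/-- substitution `x_{j,i} ↦ x_{j,i} + c_{j,i} x_{0,i}` on the multiprojective side -/
noncomputable def subR (c : (i : Fin t) → Fin (n i) → k) (p : MPVar t n) :
    MvPolynomial (MPVar t n) k :=
  Fin.cases (X ⟨p.1, 0⟩) (fun j' => X ⟨p.1, j'.succ⟩ + C (c p.1 j') * X ⟨p.1, 0⟩) p.2

lemma subR_zero (c : (i : Fin t) → Fin (n i) → k) (i : Fin t) :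
    subR c ⟨i, 0⟩ = X ⟨i, 0⟩ := by
  simp [subR]

lemma subR_succ (c : (i : Fin t) → Fin (n i) → k) (i : Fin t) (j : Fin (n i)) :
    subR c ⟨i, j.succ⟩ = X ⟨i, j.succ⟩ + C (c i j) * X ⟨i, 0⟩ := by
  simp [subR]

lemma subS_inv (c c' : (i : Fin t) → Fin (n i) → k) (hcc : ∀ i j, c i j + c' i j = 0)
    (F : MvPolynomial (TVar t n) k) :
    aeval (subS c) (aeval (subS c') F) = F := by
  have h : (aeval (subS c)).comp (aeval (subS c')) = AlgHom.id k (MvPolynomial (TVar t n) k) := by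
    apply MvPolynomial.algHom_ext
    intro u
    cases u with
    | none => simp [subS]
    | some p =>
      simp only [AlgHom.comp_apply, aeval_X, AlgHom.id_apply]
      rw [show subS c' (some p) = X (some p) + C (c' p.1 p.2) * X none from rfl]
      rw [map_add, map_mul, aeval_X, aeval_X, aeval_C]
      rw [show subS c (some p) = X (some p) + C (c p.1 p.2) * X none from rfl]
      rw [show subS c (none : TVar t n) = X none from rfl]
      rw [show (algebraMap k (MvPolynomial (TVar t n) k)) (c' p.1 p.2) = C (c' p.1 p.2) from rfl]
      have hC : (C (c p.1 p.2) : MvPolynomial (TVar t n) k) + C (c' p.1 p.2) = 0 := by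
        rw [← map_add, hcc, map_zero]
      linear_combination (X (none : TVar t n)) * hC
  exact DFunLike.congr_fun h F

lemma subR_inv (c c' : (i : Fin t) → Fin (n i) → k) (hcc : ∀ i j, c i j + c' i j = 0)
    (F : MvPolynomial (MPVar t n) k) :
    aeval (subR c) (aeval (subR c') F) = F := by
  have h : (aeval (subR c)).comp (aeval (subR c')) = AlgHom.id k (MvPolynomial (MPVar t n) k) := by
    apply MvPolynomial.algHom_ext
    rintro ⟨i, j⟩
    simp only [AlgHom.comp_apply, aeval_X, AlgHom.id_apply]
    induction j using Fin.cases with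
    | zero => rw [subR_zero, aeval_X, subR_zero]
    | succ j' =>
      rw [subR_succ, map_add, map_mul, aeval_X, aeval_X, aeval_C, subR_succ, subR_zero]
      rw [show (algebraMap k (MvPolynomial (MPVar t n) k)) (c' i j') = C (c' i j') from rfl]
      have hC : (C (c i j') : MvPolynomial (MPVar t n) k) + C (c' i j') = 0 := by
        rw [← map_add, hcc, map_zero]
      linear_combination (X (⟨i, 0⟩ : MPVar t n)) * hC
  exact DFunLike.congr_fun h F

lemma mem_map_aeval_iff {σ' : Type} (f g : MvPolynomial σ' k →ₐ[k] MvPolynomial σ' k)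
    (hfg : ∀ x, f (g x) = x) (hgf : ∀ x, g (f x) = x) (N : Ideal (MvPolynomial σ' k))
    (F : MvPolynomial σ' k) :
    F ∈ N.map (f : MvPolynomial σ' k →ₐ[k] MvPolynomial σ' k) ↔ g F ∈ N := by
  constructor
  · intro hF
    obtain ⟨x, hx, rfl⟩ := (Ideal.mem_map_iff_of_surjective _ (fun y => ⟨g y, hfg y⟩)).mp hF
    rwa [hgf]
  · intro hF
    have h2 : F = f (g F) := (hfg F).symm
    rw [h2]
    exact Ideal.mem_map_of_mem _ hF

lemma phi_X_none : phi (k := k) (X (none : TVar t n)) = ∏ i, X (⟨i,0⟩ : MPVar t n) := by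
  rw [phi, aeval_X]
  rw [show Eexp (none : TVar t n) = ∑ i, Finsupp.single ⟨i, 0⟩ 1 from rfl]
  exact (prod_monomial _ _).symm

lemma phi_X_some (p : Σ i : Fin t, Fin (n i)) :
    phi (k := k) (X (some p)) = X (⟨p.1, p.2.succ⟩ : MPVar t n) *
      ∏ l ∈ Finset.univ.erase p.1, X (⟨l,0⟩ : MPVar t n) := by
  rw [phi, aeval_X]
  rw [show Eexp (some p : TVar t n) = Finsupp.single ⟨p.1, p.2.succ⟩ 1 +
    ∑ l ∈ Finset.univ.erase p.1, Finsupp.single ⟨l, 0⟩ 1 from rfl]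
  rw [show (X (⟨p.1, p.2.succ⟩ : MPVar t n) : MvPolynomial (MPVar t n) k)
    = monomial (Finsupp.single ⟨p.1, p.2.succ⟩ 1) 1 from rfl]
  rw [show (∏ l ∈ Finset.univ.erase p.1, X (⟨l,0⟩ : MPVar t n) : MvPolynomial (MPVar t n) k)
    = monomial (∑ l ∈ Finset.univ.erase p.1, Finsupp.single (⟨l,0⟩ : MPVar t n) 1) 1
    from prod_monomial _ _]
  rw [MvPolynomial.monomial_mul, one_mul]

lemma phi_comp_subS (c : (i : Fin t) → Fin (n i) → k) :
    (aeval (subR c)).comp (phi (k := k) (t := t) (n := n))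
      = (phi (k := k)).comp (aeval (subS c)) := by
  apply MvPolynomial.algHom_ext
  intro u
  cases u with
  | none =>
    simp only [AlgHom.comp_apply, aeval_X]
    rw [show subS c (none : TVar t n) = X none from rfl, phi_X_none, map_prod]
    apply Finset.prod_congr rfl
    intro i _
    rw [aeval_X, subR_zero]
  | some p =>
    simp only [AlgHom.comp_apply, aeval_X]
    rw [show subS c (some p) = X (some p) + C (c p.1 p.2) * X none from rfl]
    rw [phi_X_some, map_mul, aeval_X, subR_succ, map_prod, map_add, map_mul, phi_X_some,
      phi_X_none]
    rw [show (phi (k := k) (t := t) (n := n)) (C (c p.1 p.2)) = C (c p.1 p.2) from by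
      rw [phi]; exact aeval_C _ _]
    rw [Finset.prod_congr rfl (fun l _ => by rw [aeval_X, subR_zero] :
      ∀ l ∈ Finset.univ.erase p.1, aeval (subR c) (X (⟨l,0⟩ : MPVar t n)) = X ⟨l,0⟩)]
    rw [← Finset.mul_prod_erase Finset.univ (fun l => X (⟨l,0⟩ : MPVar t n))
      (Finset.mem_univ p.1)]
    ring

lemma aeval_subR_Mexp (c : (i : Fin t) → Fin (n i) → k) (a : Fin t → ℕ) :
    aeval (subR c) (monomial (Mexp (n := n) a) (1:k)) = monomial (Mexp (n := n) a) 1 := by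
  have h1 : (monomial (Mexp (n := n) a) (1:k))
      = ∏ i, X (⟨i,0⟩ : MPVar t n) ^ ((∑ l, a l) - a i) := by
    rw [Mexp, ← prod_monomial]
    apply Finset.prod_congr rfl
    intro i _
    rw [MvPolynomial.X_pow_eq_monomial]
  rw [h1, map_prod]
  apply Finset.prod_congr rfl
  intro i _
  rw [map_pow, aeval_X, subR_zero]

lemma prod_v_ne_zero (v : (i : Fin t) → Fin (n i + 1) → k) (hv : ∀ i, v i 0 ≠ 0) :
    (∏ l, v l 0) ≠ 0 :=
  Finset.prod_ne_zero_iff.mpr fun l _ => hv l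

lemma pointIdeal_fMap_eq (v : (i : Fin t) → Fin (n i + 1) → k) (hv : ∀ i, v i 0 ≠ 0) :
    pointIdeal k (fMap k t n v)
      = (Ideal.span (MvPolynomial.X '' {u : TVar t n | u ≠ none})).map
          (aeval (subS (fun i j => - (v i j.succ / v i 0)))
            : MvPolynomial (TVar t n) k →ₐ[k] MvPolynomial (TVar t n) k) := by
  classical
  rw [Ideal.map_span, pointIdeal]
  apply le_antisymm
  · rw [Ideal.span_le]
    rintro f ⟨hf1, hf2⟩
    set b : TVar t n → k := fun u => coeff (Finsupp.single u 1) f with hb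
    have hrep : f = ∑ u : TVar t n, C (b u) * X u := by
      rw [Finset.sum_congr rfl fun u _ =>
        (C_mul_X_eq_monomial : C (b u) * X u = monomial (Finsupp.single u 1) (b u))]
      exact linear_rep (homog_one_support hf1)
    have hrep2 : f = C (b none) * X none
        + ∑ p : Σ i : Fin t, Fin (n i), C (b (some p)) * X (some p) := by
      rw [hrep]
      exact Fintype.sum_option _
    set f' : MvPolynomial (TVar t n) k :=
      ∑ p : Σ i : Fin t, Fin (n i),
        C (b (some p)) * (X (some p) + C (-(v p.1 p.2.succ / v p.1 0)) * X none) with hf'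
    have hf'mem : f' ∈ Ideal.span ((aeval (subS (fun i j => - (v i j.succ / v i 0)))) ''
        (MvPolynomial.X (R := k) '' {u : TVar t n | u ≠ none})) := by
      apply Ideal.sum_mem
      intro p _
      apply Ideal.mul_mem_left
      apply Ideal.subset_span
      refine ⟨X (some p), ⟨some p, by simp, rfl⟩, ?_⟩
      rw [aeval_X]
      rfl
    set γ : k := b none
      + ∑ p : Σ i : Fin t, Fin (n i), b (some p) * (v p.1 p.2.succ / v p.1 0) with hγ
    have hsplit : f = f' + C γ * X none := by
      rw [hrep2, hf', hγ]
      rw [map_add, map_sum]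
      simp only [map_mul, map_neg, neg_mul, mul_neg, mul_add, Finset.sum_add_distrib,
        add_mul, Finset.sum_mul, mul_assoc, Finset.sum_neg_distrib]
      abel
    have hwnone : fMap k t n v none = ∏ l, v l 0 := rfl
    have hev' : eval (fMap k t n v) f' = 0 := by
      rw [hf', map_sum]
      apply Finset.sum_eq_zero
      intro p _
      rw [map_mul, map_add, map_mul, eval_C, eval_C, eval_X, eval_X]
      rw [show fMap k t n v (some p)
        = v p.1 p.2.succ * ∏ l ∈ Finset.univ.erase p.1, v l 0 from rfl, hwnone]
      rw [← Finset.mul_prod_erase Finset.univ (fun l => v l 0) (Finset.mem_univ p.1)]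
      have hv0 : v p.1 0 ≠ 0 := hv p.1
      field_simp
      ring
    have hγ0 : γ = 0 := by
      have h1 : eval (fMap k t n v) f = 0 := hf2
      rw [hsplit, map_add, hev', zero_add, map_mul, eval_C, eval_X, hwnone] at h1
      rcases mul_eq_zero.mp h1 with h | h
      · exact h
      · exact absurd h (prod_v_ne_zero v hv)
    rw [hsplit, hγ0, map_zero, zero_mul, add_zero]
    exact hf'mem
  · rw [Ideal.span_le]
    rintro g ⟨xg, ⟨u, hu, rfl⟩, rfl⟩
    cases u with
    | none => exact absurd rfl hu
    | some p =>
      rw [aeval_X]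
      rw [show subS (fun i j => - (v i j.succ / v i 0)) (some p)
        = X (some p) + C (-(v p.1 p.2.succ / v p.1 0)) * X none from rfl]
      apply Ideal.subset_span
      constructor
      · exact Submodule.add_mem _ ((mem_homogeneousSubmodule _ _).mpr (isHomogeneous_X _ _))
          ((mem_homogeneousSubmodule _ _).mpr (MvPolynomial.isHomogeneous_C_mul_X _ _))
      · rw [map_add, map_mul, eval_C, eval_X, eval_X]
        rw [show fMap k t n v (some p)
          = v p.1 p.2.succ * ∏ l ∈ Finset.univ.erase p.1, v l 0 from rfl]
        rw [show fMap k t n v none = ∏ l, v l 0 from rfl]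
        rw [← Finset.mul_prod_erase Finset.univ (fun l => v l 0) (Finset.mem_univ p.1)]
        have hv0 : v p.1 0 ≠ 0 := hv p.1
        field_simp
        ring

lemma X_mem_multiHomog (i : Fin t) (j : Fin (n i + 1)) :
    (X (⟨i, j⟩ : MPVar t n) : MvPolynomial (MPVar t n) k)
      ∈ multiHomog k t n (Pi.single i 1) := by
  apply Submodule.subset_span
  refine ⟨Finsupp.single ⟨i,j⟩ 1, fun l => ?_, rfl⟩
  rw [sum_single_block ⟨i,j⟩ 1 l, Pi.single_apply]
  by_cases h : i = l
  · rw [if_pos h, if_pos h.symm]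
  · rw [if_neg h, if_neg (Ne.symm h)]

lemma mpPointIdeal_eq (v : (i : Fin t) → Fin (n i + 1) → k) (hv : ∀ i, v i 0 ≠ 0) :
    mpPointIdeal k t n v
      = (Ideal.span (MvPolynomial.X '' {p : MPVar t n | p.2 ≠ 0})).map
          (aeval (subR (fun i j => - (v i j.succ / v i 0)))
            : MvPolynomial (MPVar t n) k →ₐ[k] MvPolynomial (MPVar t n) k) := by
  classical
  rw [Ideal.map_span, mpPointIdeal]
  apply le_antisymm
  · rw [Ideal.span_le]
    rintro f ⟨⟨i, hfi⟩, hf2⟩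
    set b : MPVar t n → k := fun p => coeff (Finsupp.single p 1) f with hb
    have hrep : f = ∑ p : MPVar t n, monomial (Finsupp.single p 1) (b p) :=
      linear_rep (fun d hd => by
        obtain ⟨j, hj⟩ := multiHomog_single_support i hfi d hd
        exact ⟨⟨i, j⟩, hj⟩)
    have hb0 : ∀ p : MPVar t n, p.1 ≠ i → b p = 0 := by
      intro p hp
      by_contra hc
      obtain ⟨j, hj⟩ := multiHomog_single_support i hfi (Finsupp.single p 1)
        (MvPolynomial.mem_support_iff.mpr hc)
      exact hp (congrArg Sigma.fst (Finsupp.single_left_injective one_ne_zero hj))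
    have hrep2 : f = ∑ j : Fin (n i + 1), C (b ⟨i,j⟩) * X ⟨i,j⟩ := by
      rw [hrep, ← Finset.univ_sigma_univ, Finset.sum_sigma]
      rw [Finset.sum_eq_single i (fun i' _ hi' => Finset.sum_eq_zero fun j _ => by
        rw [hb0 ⟨i',j⟩ hi', MvPolynomial.monomial_zero])
        (fun h => absurd (Finset.mem_univ i) h)]
      exact Finset.sum_congr rfl fun j _ => C_mul_X_eq_monomial.symm
    have hrep3 : f = C (b ⟨i,0⟩) * X ⟨i,0⟩
        + ∑ j : Fin (n i), C (b ⟨i,j.succ⟩) * X ⟨i,j.succ⟩ := by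
      rw [hrep2]
      exact Fin.sum_univ_succ _
    set f' : MvPolynomial (MPVar t n) k :=
      ∑ j : Fin (n i),
        C (b ⟨i,j.succ⟩) * (X ⟨i,j.succ⟩ + C (-(v i j.succ / v i 0)) * X ⟨i,0⟩) with hf'
    have hf'mem : f' ∈ Ideal.span ((aeval (subR (fun i j => - (v i j.succ / v i 0)))) ''
        (MvPolynomial.X (R := k) '' {p : MPVar t n | p.2 ≠ 0})) := by
      apply Ideal.sum_mem
      intro j _
      apply Ideal.mul_mem_left
      apply Ideal.subset_span
      refine ⟨X ⟨i, j.succ⟩, ⟨⟨i, j.succ⟩, Fin.succ_ne_zero j, rfl⟩, ?_⟩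
      rw [aeval_X, subR_succ]
    set γ : k := b ⟨i,0⟩ + ∑ j : Fin (n i), b ⟨i,j.succ⟩ * (v i j.succ / v i 0) with hγ
    have hsplit : f = f' + C γ * X ⟨i,0⟩ := by
      rw [hrep3, hf', hγ]
      rw [map_add, map_sum]
      simp only [map_mul, map_neg, neg_mul, mul_neg, mul_add, Finset.sum_add_distrib,
        add_mul, Finset.sum_mul, mul_assoc, Finset.sum_neg_distrib]
      abel
    have hev' : eval (fun p : MPVar t n => v p.1 p.2) f' = 0 := by
      rw [hf', map_sum]
      apply Finset.sum_eq_zero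
      intro j _
      rw [map_mul, map_add, map_mul, eval_C, eval_C, eval_X, eval_X]
      have hv0 : v i 0 ≠ 0 := hv i
      field_simp
      ring
    have hγ0 : γ = 0 := by
      have h1 : eval (fun p : MPVar t n => v p.1 p.2) f = 0 := hf2
      rw [hsplit, map_add, hev', zero_add, map_mul, eval_C, eval_X] at h1
      rcases mul_eq_zero.mp h1 with h | h
      · exact h
      · exact absurd h (hv i)
    rw [hsplit, hγ0, map_zero, zero_mul, add_zero]
    exact hf'mem
  · rw [Ideal.span_le]
    rintro g ⟨xg, ⟨p, hp, rfl⟩, rfl⟩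
    obtain ⟨i, j⟩ := p
    have hp' : j ≠ 0 := hp
    rw [aeval_X]
    obtain ⟨j', rfl⟩ : ∃ j' : Fin (n i), j = j'.succ := ⟨j.pred hp', (Fin.succ_pred j hp').symm⟩
    rw [subR_succ]
    apply Ideal.subset_span
    constructor
    · refine ⟨i, ?_⟩
      apply Submodule.add_mem
      · exact X_mem_multiHomog i j'.succ
      · rw [MvPolynomial.C_mul']
        exact Submodule.smul_mem _ _ (X_mem_multiHomog i 0)
    · rw [map_add, map_mul, eval_C, eval_X, eval_X]
      have hv0 : v i 0 ≠ 0 := hv i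
      field_simp
      ring

lemma point_transfer (ht : 1 ≤ t) (a : Fin t → ℕ)
    (v : (i : Fin t) → Fin (n i + 1) → k) (hv : ∀ i, v i 0 ≠ 0) (m : ℕ)
    (F : MvPolynomial (TVar t n) k) (G : MvPolynomial (MPVar t n) k)
    (hFG : phi (k := k) F = monomial (Mexp (n := n) a) 1 * G) :
    F ∈ (pointIdeal k (fMap k t n v)) ^ m ↔ G ∈ (mpPointIdeal k t n v) ^ m := by
  classical
  set c : (i : Fin t) → Fin (n i) → k := fun i j => - (v i j.succ / v i 0) with hc
  set c' : (i : Fin t) → Fin (n i) → k := fun i j => (v i j.succ / v i 0) with hc'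
  have hcc : ∀ i j, c i j + c' i j = 0 := fun i j => by simp [hc, hc']
  have hcc' : ∀ i j, c' i j + c i j = 0 := fun i j => by simp [hc, hc']
  rw [pointIdeal_fMap_eq v hv, mpPointIdeal_eq v hv, ← Ideal.map_pow, ← Ideal.map_pow]
  rw [mem_map_aeval_iff (aeval (subS c)) (aeval (subS c'))
    (fun x => subS_inv c c' hcc x) (fun x => subS_inv c' c hcc' x)]
  rw [mem_map_aeval_iff (aeval (subR c)) (aeval (subR c'))
    (fun x => subR_inv c c' hcc x) (fun x => subR_inv c' c hcc' x)]
  have hkey : phi (k := k) (aeval (subS c') F)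
      = monomial (Mexp (n := n) a) 1 * (aeval (subR c') G) := by
    have h1 := congrArg (aeval (subR c')) hFG
    rw [map_mul, aeval_subR_Mexp] at h1
    rw [← h1]
    exact (DFunLike.congr_fun (phi_comp_subS c') F).symm
  rw [mem_span_X_pow_iff, mem_span_X_pow_iff]
  have hsupp : (aeval (subS c') F).support.image Texp
      = (aeval (subR c') G).support.image (fun d => Mexp (n := n) a + d) := by
    rw [← phi_support ht (aeval (subS c') F), hkey, monomial_one_mul_support]
  have hdeg : ∀ (e : TVar t n →₀ ℕ) (d : MPVar t n →₀ ℕ), Texp e = Mexp (n := n) a + d →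
      pdeg (fun u : TVar t n => u ≠ none) e = pdeg (fun p : MPVar t n => p.2 ≠ 0) d := by
    intro e d hed
    rw [pdeg_ne_none, sum_some_sigma, pdeg_snd_ne_zero]
    apply Finset.sum_congr rfl
    intro i _
    apply Finset.sum_congr rfl
    intro j _
    rw [← Texp_apply_succ e i j, hed, Finsupp.add_apply, Mexp_apply_succ, zero_add]
  constructor
  · intro hF d hd
    have hmem : Mexp (n := n) a + d ∈ (aeval (subS c') F).support.image Texp := by
      rw [hsupp]; exact Finset.mem_image_of_mem _ hd
    obtain ⟨e, he, hed⟩ := Finset.mem_image.mp hmem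
    rw [← hdeg e d hed]
    exact hF e he
  · intro hG e he
    have hmem : Texp e ∈ (aeval (subR c') G).support.image (fun d => Mexp (n := n) a + d) := by
      rw [← hsupp]; exact Finset.mem_image_of_mem _ he
    obtain ⟨d, hd, hed⟩ := Finset.mem_image.mp hmem
    rw [hdeg e d hed.symm]
    exact hG d hd

lemma support_sum_monomials {σ' : Type} {ι' : Type} [DecidableEq σ'] (s : Finset ι')
    (g : ι' → (σ' →₀ ℕ)) (cf : ι' → k) :
    (∑ e ∈ s, monomial (g e) (cf e)).support ⊆ s.image g := by
  classical
  refine MvPolynomial.support_sum.trans ?_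
  intro d hd
  rw [Finset.mem_biUnion] at hd
  obtain ⟨e, he, hde⟩ := hd
  have : d ∈ (monomial (g e) (cf e)).support := hde
  rw [MvPolynomial.support_monomial] at this
  by_cases hc : cf e = 0
  · rw [if_pos hc] at this; exact absurd this (Finset.notMem_empty d)
  · rw [if_neg hc] at this
    rw [Finset.mem_singleton] at this
    subst this
    exact Finset.mem_image_of_mem _ he

lemma Texp_zero_add (e : TVar t n →₀ ℕ) (i : Fin t) :
    Texp e ⟨i,0⟩ + ∑ j : Fin (n i), e (some ⟨i,j⟩) = ∑ u, e u := by
  have hbs := Texp_block_sum e i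
  rw [Fin.sum_univ_succ, Finset.sum_congr rfl (fun j _ => Texp_apply_succ e i j)] at hbs
  exact hbs

/-- the exponent on `P^{n_1} × ⋯ × P^{n_t}` corresponding to a multidegree-`a` exponent
on `P^n`, after dividing by the `(a-a_i)`-th powers of the `x_{0,i}` -/
noncomputable def Sexp (d : MPVar t n →₀ ℕ) : TVar t n →₀ ℕ :=
  Finsupp.equivFunOnFinite.symm fun u =>
    Option.rec (∑ i, d ⟨i, 0⟩) (fun p => d ⟨p.1, p.2.succ⟩) u

lemma Sexp_none (d : MPVar t n →₀ ℕ) : Sexp (n := n) d none = ∑ i, d ⟨i,0⟩ :=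
  rfl

lemma Sexp_some (d : MPVar t n →₀ ℕ) (p : Σ i : Fin t, Fin (n i)) :
    Sexp (n := n) d (some p) = d ⟨p.1, p.2.succ⟩ :=
  rfl

lemma Sexp_total (a : Fin t → ℕ) (d : MPVar t n →₀ ℕ) (hd : ∀ i, ∑ j, d ⟨i,j⟩ = a i) :
    ∑ u, Sexp (n := n) d u = ∑ l, a l := by
  rw [Fintype.sum_option (fun u => Sexp (n := n) d u)]
  rw [Sexp_none, sum_some_sigma (Sexp (n := n) d)]
  rw [Finset.sum_congr rfl (fun i _ => Finset.sum_congr rfl fun j _ => Sexp_some d ⟨i, j⟩)]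
  rw [← Finset.sum_add_distrib]
  apply Finset.sum_congr rfl
  intro i _
  rw [← hd i, Fin.sum_univ_succ]

lemma Texp_Sexp (a : Fin t → ℕ) (d : MPVar t n →₀ ℕ) (hd : ∀ i, ∑ j, d ⟨i,j⟩ = a i) :
    Texp (Sexp (n := n) d) = Mexp (n := n) a + d := by
  ext pp
  obtain ⟨i, j⟩ := pp
  refine Fin.cases ?_ (fun j' => ?_) j
  · rw [Finsupp.add_apply, Mexp_apply_zero]
    have h1 := Texp_zero_add (Sexp (n := n) d) i
    rw [Sexp_total a d hd] at h1
    have h2 : ∑ j' : Fin (n i), Sexp (n := n) d (some ⟨i,j'⟩)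
        = ∑ j' : Fin (n i), d ⟨i,j'.succ⟩ :=
      Finset.sum_congr rfl fun j' _ => Sexp_some d ⟨i, j'⟩
    rw [h2] at h1
    have h3 : d ⟨i,0⟩ + ∑ j' : Fin (n i), d ⟨i,j'.succ⟩ = a i := by
      rw [← hd i, Fin.sum_univ_succ]
    have h4 : a i ≤ ∑ l, a l :=
      Finset.single_le_sum (fun _ _ => Nat.zero_le _) (Finset.mem_univ i)
    omega
  · rw [Finsupp.add_apply, Mexp_apply_succ, Texp_apply_succ, zero_add]
    exact Sexp_some d ⟨i, j'⟩

end TN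

end Stmt1Aux

open MvPolynomial in
/-- Theorem 1.1: for a scheme `Z = m_1 R_1 + ⋯ + m_s R_s` of fat points of
`P^{n_1} × ⋯ × P^{n_t}` supported in the chart `{x_{0,1}⋯x_{0,t} ≠ 0}`, and the
corresponding scheme `W = m_1 f(R_1) + ⋯ + m_s f(R_s) + (a−a_1)Π_1 + ⋯ + (a−a_t)Π_t` of
`P^n`, the degree-`a` piece of `I_W` and the multidegree-`(a_1,…,a_t)` piece of `I_Z` have
the same `k`-dimension. -/
theorem statement_1 (k : Type) [Field k] (t : ℕ) (ht : 1 ≤ t)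
    (n : Fin t → ℕ) (hn : ∀ i, 1 ≤ n i) (a : Fin t → ℕ) (ha : ∀ i, 1 ≤ a i)
    (s : ℕ) (v : Fin s → (i : Fin t) → Fin (n i + 1) → k)
    (hchart : ∀ j i, v j i 0 ≠ 0)
    (m : Fin s → ℕ) (hm : ∀ j, 1 ≤ m j) :
    Module.finrank k
      (idealPiece k
        ((⨅ j, (pointIdeal k (fMap k t n (v j))) ^ (m j)) ⊓
          ⨅ i, (coordSubspaceIdeal k t n i) ^ ((∑ i, a i) - a i))
        (∑ i, a i))
    = Module.finrank k
        (mIdealPiece k (⨅ j, (mpPointIdeal k t n (v j)) ^ (m j)) a) := by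
  classical
  have hA : ∀ i, a i ≤ ∑ l, a l :=
    fun i => Finset.single_le_sum (fun _ _ => Nat.zero_le _) (Finset.mem_univ i)
  set Φ : MvPolynomial (TVar t n) k →ₗ[k] MvPolynomial (MPVar t n) k :=
    (Stmt1Aux.phi (k := k) (t := t) (n := n)).toLinearMap with hΦ
  set Mx : MvPolynomial (MPVar t n) k := monomial (Stmt1Aux.Mexp (n := n) a) 1 with hMx
  have hMxne : Mx ≠ 0 := by
    rw [hMx, Ne, MvPolynomial.monomial_eq_zero]
    exact one_ne_zero
  have hΦinj : Function.Injective Φ := Stmt1Aux.phi_injective ht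
  have hLMinj : Function.Injective (LinearMap.mulLeft k Mx) := by
    intro x y hxy
    rw [LinearMap.mulLeft_apply, LinearMap.mulLeft_apply] at hxy
    exact mul_left_cancel₀ hMxne hxy
  have hcsi : ∀ i, coordSubspaceIdeal k t n i
      = Ideal.span (MvPolynomial.X (R := k) ''
          {u : TVar t n | ∀ j : Fin (n i), u ≠ some ⟨i,j⟩}) := by
    intro i
    rw [coordSubspaceIdeal]
    congr 1
    ext g
    constructor
    · rintro ⟨u, hu, rfl⟩
      exact ⟨u, hu, rfl⟩
    · rintro ⟨u, hu, rfl⟩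
      exact ⟨u, hu, rfl⟩
  have hmap : Submodule.map Φ
      (idealPiece k
        ((⨅ j, (pointIdeal k (fMap k t n (v j))) ^ (m j)) ⊓
          ⨅ i, (coordSubspaceIdeal k t n i) ^ ((∑ i, a i) - a i))
        (∑ i, a i))
      = Submodule.map (LinearMap.mulLeft k Mx)
        (mIdealPiece k (⨅ j, (mpPointIdeal k t n (v j)) ^ (m j)) a) := by
    apply le_antisymm
    · rintro x ⟨F, hF, rfl⟩
      obtain ⟨hFI, hFh⟩ := Submodule.mem_inf.mp hF
      rw [Submodule.restrictScalars_mem] at hFI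
      obtain ⟨hFP, hFPi⟩ := Submodule.mem_inf.mp hFI
      have hFPj : ∀ j, F ∈ (pointIdeal k (fMap k t n (v j))) ^ (m j) :=
        fun j => (Submodule.mem_iInf _).mp hFP j
      have hFPii : ∀ i, F ∈ (coordSubspaceIdeal k t n i) ^ ((∑ l, a l) - a i) :=
        fun i => (Submodule.mem_iInf _).mp hFPi i
      have hFdeg : ∀ e ∈ F.support, ∑ u, e u = ∑ l, a l :=
        (Stmt1Aux.mem_homog_iff _ F).mp hFh
      have hbound : ∀ e ∈ F.support, ∀ i, ∑ j : Fin (n i), e (some ⟨i,j⟩) ≤ a i := by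
        intro e he i
        have h1 := (Stmt1Aux.mem_span_X_pow_iff _ _ _).mp
          (by rw [← hcsi i]; exact hFPii i) e he
        have h2 := Stmt1Aux.pdeg_Wi i e
        have h3 := hFdeg e he
        have h4 := hA i
        omega
      have hle : ∀ e ∈ F.support, ∀ pp : MPVar t n,
          Stmt1Aux.Mexp (n := n) a pp ≤ Stmt1Aux.Texp e pp := by
        intro e he pp
        obtain ⟨i, j⟩ := pp
        refine Fin.cases ?_ (fun j' => ?_) j
        · rw [Stmt1Aux.Mexp_apply_zero]
          have h1 := Stmt1Aux.Texp_zero_add e i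
          rw [hFdeg e he] at h1
          have h2 := hbound e he i
          omega
        · rw [Stmt1Aux.Mexp_apply_succ]
          exact Nat.zero_le _
      set G : MvPolynomial (MPVar t n) k :=
        ∑ e ∈ F.support,
          monomial (Stmt1Aux.Texp e - Stmt1Aux.Mexp (n := n) a) (coeff e F) with hGdef
      have hphiF : Stmt1Aux.phi (k := k) F = Mx * G := by
        have hstep : Stmt1Aux.phi (k := k) F
            = ∑ e ∈ F.support, monomial (Stmt1Aux.Texp e) (coeff e F) := by
          conv_lhs => rw [← MvPolynomial.support_sum_monomial_coeff F]
          rw [map_sum]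
          exact Finset.sum_congr rfl fun e _ => Stmt1Aux.phi_monomial e _
        rw [hstep, hGdef, Finset.mul_sum]
        apply Finset.sum_congr rfl
        intro e he
        rw [hMx, MvPolynomial.monomial_mul, one_mul]
        have hexp : Stmt1Aux.Mexp (n := n) a
            + (Stmt1Aux.Texp e - Stmt1Aux.Mexp (n := n) a) = Stmt1Aux.Texp e := by
          ext pp
          have := hle e he pp
          simp only [Finsupp.add_apply, Finsupp.tsub_apply]
          omega
        rw [hexp]
      refine ⟨G, Submodule.mem_inf.mpr ⟨?_, ?_⟩, ?_⟩
      · rw [Submodule.restrictScalars_mem]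
        refine (Submodule.mem_iInf _).mpr fun j => ?_
        exact (Stmt1Aux.point_transfer ht a (v j) (hchart j) (m j) F G hphiF).mp (hFPj j)
      · rw [Stmt1Aux.mem_multiHomog_iff]
        intro d hd i
        obtain ⟨e, he, rfl⟩ := Finset.mem_image.mp
          (Stmt1Aux.support_sum_monomials F.support _ _ hd)
        have h0 : (Stmt1Aux.Texp e - Stmt1Aux.Mexp (n := n) a) ⟨i, (0 : Fin (n i + 1))⟩
            = Stmt1Aux.Texp e ⟨i,0⟩ - ((∑ l, a l) - a i) := by
          rw [Finsupp.tsub_apply, Stmt1Aux.Mexp_apply_zero]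
        have hsucc : ∀ j' : Fin (n i),
            (Stmt1Aux.Texp e - Stmt1Aux.Mexp (n := n) a) ⟨i, j'.succ⟩
              = e (some ⟨i,j'⟩) := by
          intro j'
          rw [Finsupp.tsub_apply, Stmt1Aux.Mexp_apply_succ, Stmt1Aux.Texp_apply_succ,
            Nat.sub_zero]
        rw [Fin.sum_univ_succ, h0, Finset.sum_congr rfl fun j' _ => hsucc j']
        have h1 := Stmt1Aux.Texp_zero_add e i
        rw [hFdeg e he] at h1
        have h2 := hbound e he i
        have h4 := hA i
        omega
      · show LinearMap.mulLeft k Mx G = Φ F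
        rw [LinearMap.mulLeft_apply, hΦ, AlgHom.toLinearMap_apply, hphiF]
    · rintro x ⟨G, hG, rfl⟩
      obtain ⟨hGI, hGh⟩ := Submodule.mem_inf.mp hG
      rw [Submodule.restrictScalars_mem] at hGI
      have hGPj : ∀ j, G ∈ (mpPointIdeal k t n (v j)) ^ (m j) :=
        fun j => (Submodule.mem_iInf _).mp hGI j
      have hGmh : ∀ d ∈ G.support, ∀ i, ∑ jj, d ⟨i, jj⟩ = a i :=
        (Stmt1Aux.mem_multiHomog_iff a G).mp hGh
      set F : MvPolynomial (TVar t n) k :=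
        ∑ d ∈ G.support, monomial (Stmt1Aux.Sexp (n := n) d) (coeff d G) with hFdef
      have hphiF : Stmt1Aux.phi (k := k) F = Mx * G := by
        rw [hFdef, map_sum]
        conv_rhs => rw [← MvPolynomial.support_sum_monomial_coeff G]
        rw [Finset.mul_sum]
        apply Finset.sum_congr rfl
        intro d hd
        rw [Stmt1Aux.phi_monomial, Stmt1Aux.Texp_Sexp a d (hGmh d hd), hMx,
          MvPolynomial.monomial_mul, one_mul]
      refine ⟨F, Submodule.mem_inf.mpr ⟨?_, ?_⟩, ?_⟩
      · rw [Submodule.restrictScalars_mem]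
        refine Submodule.mem_inf.mpr ⟨?_, ?_⟩
        · refine (Submodule.mem_iInf _).mpr fun j => ?_
          exact (Stmt1Aux.point_transfer ht a (v j) (hchart j) (m j) F G hphiF).mpr (hGPj j)
        · refine (Submodule.mem_iInf _).mpr fun i => ?_
          rw [hcsi i, Stmt1Aux.mem_span_X_pow_iff]
          intro e he
          obtain ⟨d, hd, rfl⟩ := Finset.mem_image.mp
            (Stmt1Aux.support_sum_monomials G.support _ _ he)
          have h1 := Stmt1Aux.pdeg_Wi i (Stmt1Aux.Sexp (n := n) d)
          rw [Stmt1Aux.Sexp_total a d (hGmh d hd)] at h1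
          have h2 : ∑ j' : Fin (n i), Stmt1Aux.Sexp (n := n) d (some ⟨i,j'⟩)
              = ∑ j' : Fin (n i), d ⟨i,j'.succ⟩ :=
            Finset.sum_congr rfl fun j' _ => Stmt1Aux.Sexp_some d ⟨i, j'⟩
          rw [h2] at h1
          have h3 : d ⟨i, (0 : Fin (n i + 1))⟩ + ∑ j' : Fin (n i), d ⟨i,j'.succ⟩ = a i := by
            rw [← hGmh d hd i, Fin.sum_univ_succ]
          have h4 := hA i
          omega
      · rw [mem_homogeneousSubmodule] at *
        rw [← mem_homogeneousSubmodule, Stmt1Aux.mem_homog_iff]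
        intro e he
        obtain ⟨d, hd, rfl⟩ := Finset.mem_image.mp
          (Stmt1Aux.support_sum_monomials G.support _ _ he)
        exact Stmt1Aux.Sexp_total a d (hGmh d hd)
      · show Φ F = LinearMap.mulLeft k Mx G
        rw [LinearMap.mulLeft_apply, hΦ, AlgHom.toLinearMap_apply, hphiF]
  refine Eq.trans (LinearEquiv.finrank_eq (Submodule.equivMapOfInjective Φ hΦinj _)) ?_
  rw [hmap]
  exact (LinearEquiv.finrank_eq
    (Submodule.equivMapOfInjective (LinearMap.mulLeft k Mx) hLMinj _)).symm
end

section
/- Let k be a field and 1 ≤ n_1 ≤ n_2 integers. In the bigraded ring R = k[x_0,…,x_{n_1}; y_0,…,y_{n_2}] (coordinate ring of P^{n_1}×P^{n_2}), for i = 0,…,n_1 let ℘_i be the bihomogeneous prime ideal generated by {x_j : j ≠ i, 0 ≤ j ≤ n_1} and {y_j : j ≠ i, 0 ≤ j ≤ n_2} (the ideal of the i-th 'diagonal' pair of coordinate points), and let I = ℘_0^2 ∩ ⋯ ∩ ℘_{n_1}^2. Then dim_k R_{(1,2)} − dim_k I_{(1,2)} = (n_1+1)(n_1+n_2+1) and dim_k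 R_{(2,1)} − dim_k I_{(2,1)} = (n_1+1)(n_1+n_2+1); equivalently, the monomials of bidegree (1,2) not lying in I are exactly the (n_1+1)(n_2+1) monomials x_i y_i y_j (0 ≤ i ≤ n_1, 0 ≤ j ≤ n_2) together with the (n_1+1)n_1 monomials x_i y_j^2 (i ≠ j, both in {0,…,n_1}), and symmetrically for bidegree (2,1). -/
open MvPolynomial

section AuxStatement14

lemma finrank_piece {σ : Type} [DecidableEq σ] (k : Type) [Field k]
    (T : Set (σ →₀ ℕ)) (hT : T.Finite)
    (I : Ideal (MvPolynomial σ k)) (Q : (σ →₀ ℕ) → Prop)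
    (hQ : ∀ f : MvPolynomial σ k, f ∈ I ↔ ∀ m ∈ f.support, Q m)
    (B : Finset (σ →₀ ℕ)) (hBT : ∀ m ∈ B, m ∈ T)
    (hB : ∀ m ∈ T, (¬ Q m ↔ m ∈ B)) :
    Module.finrank k ↥(Submodule.span k ((fun m => monomial m (1:k)) '' T)) -
      Module.finrank k ↥(Submodule.restrictScalars k I ⊓
        Submodule.span k ((fun m => monomial m (1:k)) '' T)) = B.card := by
  classical
  set V := Submodule.span k ((fun m => monomial m (1:k)) '' T) with hV
  haveI : FiniteDimensional k V := FiniteDimensional.span_of_finite k (hT.image _)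
  -- support of elements of V is in T
  have hsupp : ∀ f ∈ V, ∀ m ∈ f.support, m ∈ T := by
    let W : Submodule k (MvPolynomial σ k) :=
      { carrier := {f | ∀ m ∈ f.support, m ∈ T}
        add_mem' := by
          intro a b ha hb m hm
          rcases Finset.mem_union.mp (support_add hm) with h | h
          · exact ha m h
          · exact hb m h
        zero_mem' := by simp
        smul_mem' := by
          intro c f hf m hm
          exact hf m (support_smul hm) }
    have hVW : V ≤ W := by
      rw [hV]
      apply Submodule.span_le.mpr
      rintro f ⟨m, hm, rfl⟩
      intro m' hm'
      rcases Finset.mem_singleton.mp (support_monomial_subset hm') with rfl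
      exact hm
    exact fun f hf => hVW hf
  -- the evaluation map
  let φ : V →ₗ[k] (↥B → k) := LinearMap.pi (fun b => (lcoeff k b.1).comp V.subtype)
  have hφ : ∀ (f : V) (b : ↥B), φ f b = coeff b.1 (f : MvPolynomial σ k) := fun _ _ => rfl
  have hsurj : Function.Surjective φ := by
    intro v
    have hmem : (∑ b : ↥B, v b • monomial (b.1) (1:k)) ∈ V := by
      apply Submodule.sum_mem
      intro b _
      exact Submodule.smul_mem _ _ (Submodule.subset_span ⟨b.1, hBT b.1 b.2, rfl⟩)
    refine ⟨⟨_, hmem⟩, ?_⟩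
    funext b
    rw [hφ]
    simp only [coeff_sum, coeff_smul, coeff_monomial, smul_eq_mul]
    rw [Finset.sum_eq_single b]
    · simp
    · intro b' _ hne
      rw [if_neg (fun h => hne (Subtype.ext h)), mul_zero]
    · intro h; exact absurd (Finset.mem_univ b) h
  have hker : Submodule.comap V.subtype
      (Submodule.restrictScalars k I ⊓ V) = LinearMap.ker φ := by
    ext ⟨f, hf⟩
    simp only [Submodule.mem_comap, Submodule.mem_inf, Submodule.coe_subtype,
      Submodule.restrictScalars_mem, LinearMap.mem_ker]
    constructor
    · rintro ⟨hfI, -⟩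
      funext b
      rw [hφ]
      by_contra hc
      have hm : b.1 ∈ f.support := mem_support_iff.mpr (by simpa using hc)
      exact ((hB b.1 (hBT b.1 b.2)).mpr b.2) ((hQ f).mp hfI b.1 hm)
    · intro h0
      refine ⟨(hQ f).mpr ?_, hf⟩
      intro m hm
      by_contra hq
      have hmB : m ∈ B := (hB m (hsupp f hf m hm)).mp hq
      have : coeff m f = 0 := by
        have := congrFun h0 ⟨m, hmB⟩
        rwa [hφ] at this
      exact mem_support_iff.mp hm this
  have e1 : Module.finrank k ↥(Submodule.restrictScalars k I ⊓ V) =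
      Module.finrank k ↥(LinearMap.ker φ) := by
    rw [← hker]
    exact (Submodule.comapSubtypeEquivOfLe inf_le_right).finrank_eq.symm
  have e2 := LinearMap.finrank_range_add_finrank_ker φ
  have e3 : LinearMap.range φ = ⊤ := LinearMap.range_eq_top.mpr hsurj
  rw [e3, finrank_top] at e2
  have e4 : Module.finrank k (↥B → k) = B.card := by
    rw [Module.finrank_pi]
    exact Fintype.card_coe B
  rw [e1]
  omega

lemma sum_eq_one_exists {α : Type} [Fintype α] [DecidableEq α] {f : α → ℕ}
    (h : ∑ j, f j = 1) : ∃ a, ∀ j, f j = if j = a then 1 else 0 := by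
  have h1 : ∃ a, 1 ≤ f a := by
    by_contra hc
    push_neg at hc
    have : ∑ j, f j = 0 := Finset.sum_eq_zero (fun j _ => by have := hc j; omega)
    omega
  obtain ⟨a, ha⟩ := h1
  refine ⟨a, fun j => ?_⟩
  have hsplit : f a + ∑ x ∈ Finset.univ.erase a, f x = ∑ j, f j :=
    Finset.add_sum_erase _ f (Finset.mem_univ a)
  by_cases hj : j = a
  · subst hj; simp; omega
  · rw [if_neg hj]
    have : f j ≤ ∑ x ∈ Finset.univ.erase a, f x :=
      Finset.single_le_sum (fun i _ => Nat.zero_le _)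
        (Finset.mem_erase.mpr ⟨hj, Finset.mem_univ j⟩)
    omega

lemma sum_eq_two_exists {α : Type} [Fintype α] [DecidableEq α] {f : α → ℕ}
    (h : ∑ j, f j = 2) : ∃ a b, ∀ j, f j =
      (if j = a then 1 else 0) + (if j = b then 1 else 0) := by
  have h1 : ∃ a, 1 ≤ f a := by
    by_contra hc
    push_neg at hc
    have : ∑ j, f j = 0 := Finset.sum_eq_zero (fun j _ => by have := hc j; omega)
    omega
  obtain ⟨a, ha⟩ := h1
  set g : α → ℕ := fun j => if j = a then f a - 1 else f j with hg
  have hsum : ∑ j, g j = 1 := by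
    have h2 : f a + ∑ x ∈ Finset.univ.erase a, f x = ∑ j, f j :=
      Finset.add_sum_erase _ f (Finset.mem_univ a)
    have h3 : g a + ∑ x ∈ Finset.univ.erase a, g x = ∑ j, g j :=
      Finset.add_sum_erase _ g (Finset.mem_univ a)
    have h4 : ∑ x ∈ Finset.univ.erase a, g x = ∑ x ∈ Finset.univ.erase a, f x :=
      Finset.sum_congr rfl (fun x hx => by
        rw [hg]; simp only; rw [if_neg (Finset.mem_erase.mp hx).1])
    have h5 : g a = f a - 1 := by rw [hg]; simp
    omega
  obtain ⟨b, hb⟩ := sum_eq_one_exists hsum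
  refine ⟨a, b, fun j => ?_⟩
  have hgj := hb j
  by_cases hj : j = a
  · subst hj
    have hga : g j = f j - 1 := by rw [hg]; simp
    rw [if_pos rfl]
    split_ifs at hgj ⊢ <;> omega
  · have hgf : g j = f j := by rw [hg]; simp only; rw [if_neg hj]
    rw [if_neg hj]
    omega
lemma ite_comm_eq {α : Type} [DecidableEq α] (x y : α) (c : ℕ) :
    (if x = y then c else 0) = if y = x then c else 0 := by
  by_cases h : x = y
  · simp [h]
  · simp [h, Ne.symm h]

lemma class12 {n1 n2 : ℕ} (h' : n1 + 1 ≤ n2 + 1)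
    (m : (Fin (n1+1) ⊕ Fin (n2+1)) →₀ ℕ)
    (hA : ∑ j, m (Sum.inl j) = 1) (hB : ∑ j, m (Sum.inr j) = 2) :
    (∃ i : Fin (n1+1), 2 ≤ m (Sum.inl i) + m (Sum.inr (Fin.castLE h' i)))
    ↔ ((∃ (i : Fin (n1 + 1)) (j : Fin (n2 + 1)),
          m = Finsupp.single (Sum.inl i) 1 +
            Finsupp.single (Sum.inr (Fin.castLE h' i)) 1 +
            Finsupp.single (Sum.inr j) 1)
        ∨ (∃ i j : Fin (n1 + 1), i ≠ j ∧
          m = Finsupp.single (Sum.inl i) 1 +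
            Finsupp.single (Sum.inr (Fin.castLE h' j)) 2)) := by
  obtain ⟨a, ha⟩ := sum_eq_one_exists hA
  obtain ⟨b, c, hbc⟩ := sum_eq_two_exists hB
  constructor
  · rintro ⟨i, hi⟩
    have hmi := ha i
    by_cases hia : i = a
    · subst hia
      rw [if_pos rfl] at hmi
      have h1 : 1 ≤ m (Sum.inr (Fin.castLE h' i)) := by omega
      have hbi := hbc (Fin.castLE h' i)
      have hor : Fin.castLE h' i = b ∨ Fin.castLE h' i = c := by
        by_contra hcon
        push_neg at hcon
        rw [if_neg hcon.1, if_neg hcon.2] at hbi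
        omega
      left
      rcases hor with hb | hc
      · refine ⟨i, c, ?_⟩
        ext w
        cases w with
        | inl w =>
          rw [ha w]
          by_cases hw : w = i
          · subst hw; simp
          · simp [hw, Ne.symm hw]
        | inr w =>
          rw [hbc w]
          simp only [Finsupp.coe_add, Pi.add_apply, Finsupp.single_apply,
            Sum.inr.injEq, reduceCtorEq, if_false, zero_add, hb]
          rw [ite_comm_eq w b, ite_comm_eq w c]
      · refine ⟨i, b, ?_⟩
        ext w
        cases w with
        | inl w =>
          rw [ha w]
          by_cases hw : w = i
          · subst hw; simp
          · simp [hw, Ne.symm hw]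
        | inr w =>
          rw [hbc w]
          simp only [Finsupp.coe_add, Pi.add_apply, Finsupp.single_apply,
            Sum.inr.injEq, reduceCtorEq, if_false, zero_add, hc]
          rw [ite_comm_eq w b, ite_comm_eq w c]
          omega
    · rw [if_neg hia] at hmi
      have h2 : 2 ≤ m (Sum.inr (Fin.castLE h' i)) := by omega
      have hbi := hbc (Fin.castLE h' i)
      have hbb : Fin.castLE h' i = b ∧ Fin.castLE h' i = c := by
        split_ifs at hbi with hb hc hc
        · exact ⟨hb, hc⟩
        all_goals omega
      right
      refine ⟨a, i, fun h => hia h.symm, ?_⟩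
      ext w
      cases w with
      | inl w =>
        rw [ha w]
        simp only [Finsupp.coe_add, Pi.add_apply, Finsupp.single_apply,
          Sum.inl.injEq, reduceCtorEq, if_false, add_zero]
        rw [ite_comm_eq w a]
      | inr w =>
        rw [hbc w]
        simp only [Finsupp.coe_add, Pi.add_apply, Finsupp.single_apply,
          Sum.inr.injEq, reduceCtorEq, if_false, zero_add]
        rw [← hbb.1, ← hbb.2, ite_comm_eq w (Fin.castLE h' i)]
        split_ifs <;> omega
  · rintro (⟨i, j, rfl⟩ | ⟨i, j, hij, rfl⟩)
    · refine ⟨i, ?_⟩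
      simp [Finsupp.single_apply]
      omega
    · refine ⟨j, ?_⟩
      simp [Finsupp.single_apply, hij]

lemma mem_I_iff {k : Type} [Field k] {n1 n2 : ℕ}
    (P : Fin (n1 + 1) → Ideal (MvPolynomial (Fin (n1 + 1) ⊕ Fin (n2 + 1)) k))
    (hP : P = fun i : Fin (n1 + 1) => Ideal.span
      ({f | ∃ j : Fin (n1 + 1), (j : ℕ) ≠ (i : ℕ) ∧ f = X (Sum.inl j)} ∪
       {f | ∃ j : Fin (n2 + 1), (j : ℕ) ≠ (i : ℕ) ∧ f = X (Sum.inr j)}))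
    (I : Ideal (MvPolynomial (Fin (n1 + 1) ⊕ Fin (n2 + 1)) k)) (hI : I = ⨅ i, (P i) ^ 2)
    (f : MvPolynomial (Fin (n1 + 1) ⊕ Fin (n2 + 1)) k) :
    f ∈ I ↔ ∀ m ∈ f.support, ∀ i : Fin (n1+1),
      ∃ u, (Sum.elim Fin.val Fin.val u ≠ (i:ℕ)) ∧
      ∃ v, (Sum.elim Fin.val Fin.val v ≠ (i:ℕ)) ∧
      Finsupp.single u 1 + Finsupp.single v 1 ≤ m := by
  classical
  subst hI hP
  rw [Ideal.mem_iInf]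
  have hsq : ∀ i : Fin (n1+1),
      (Ideal.span
        ({f | ∃ j : Fin (n1 + 1), (j : ℕ) ≠ (i : ℕ) ∧ f = X (Sum.inl j)} ∪
         {f | ∃ j : Fin (n2 + 1), (j : ℕ) ≠ (i : ℕ) ∧ f = X (Sum.inr j)}))^2
      = Ideal.span ((fun g => monomial g (1:k)) ''
          {g : (Fin (n1+1) ⊕ Fin (n2+1)) →₀ ℕ |
            ∃ u, (Sum.elim Fin.val Fin.val u ≠ (i:ℕ)) ∧
            ∃ v, (Sum.elim Fin.val Fin.val v ≠ (i:ℕ)) ∧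
            g = Finsupp.single u 1 + Finsupp.single v 1}) := by
    intro i
    have hgen : ({f | ∃ j : Fin (n1 + 1), (j : ℕ) ≠ (i : ℕ) ∧ f = X (Sum.inl j)} ∪
         {f | ∃ j : Fin (n2 + 1), (j : ℕ) ≠ (i : ℕ) ∧ f = X (Sum.inr j)})
        = (fun g => monomial g (1:k)) '' ((fun w => Finsupp.single w 1) ''
            {w : Fin (n1+1) ⊕ Fin (n2+1) | Sum.elim Fin.val Fin.val w ≠ (i:ℕ)}) := by
      rw [Set.image_image]
      ext g
      constructor
      · rintro (⟨j, hj, rfl⟩ | ⟨j, hj, rfl⟩)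
        · exact ⟨Sum.inl j, hj, rfl⟩
        · exact ⟨Sum.inr j, hj, rfl⟩
      · rintro ⟨w, hw, rfl⟩
        cases w with
        | inl j => exact Or.inl ⟨j, hw, rfl⟩
        | inr j => exact Or.inr ⟨j, hw, rfl⟩
    rw [hgen, sq, Ideal.span_mul_span']
    congr 1
    ext g
    simp only [Set.mem_mul, Set.mem_image, Set.mem_setOf_eq]
    constructor
    · rintro ⟨g1, ⟨x1, ⟨u, hu, rfl⟩, rfl⟩, g2, ⟨x2, ⟨v, hv, rfl⟩, rfl⟩, rfl⟩
      exact ⟨_, ⟨u, hu, v, hv, rfl⟩, by rw [monomial_mul, one_mul]⟩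
    · rintro ⟨g', ⟨u, hu, v, hv, rfl⟩, rfl⟩
      exact ⟨_, ⟨_, ⟨u, hu, rfl⟩, rfl⟩, _, ⟨_, ⟨v, hv, rfl⟩, rfl⟩,
        by rw [monomial_mul, one_mul]⟩
  constructor
  · intro h m hm i
    have := (mem_ideal_span_monomial_image.mp ((hsq i) ▸ h i)) m hm
    obtain ⟨g, ⟨u, hu, v, hv, rfl⟩, hle⟩ := this
    exact ⟨u, hu, v, hv, hle⟩
  · intro h i
    rw [hsq i, mem_ideal_span_monomial_image]
    intro m hm
    obtain ⟨u, hu, v, hv, hle⟩ := h m hm i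
    exact ⟨Finsupp.single u 1 + Finsupp.single v 1, ⟨u, hu, v, hv, rfl⟩, hle⟩

lemma key_iff {n1 n2 : ℕ} (m : (Fin (n1+1) ⊕ Fin (n2+1)) →₀ ℕ)
    {a b : ℕ} (hab : a + b = 3)
    (hA : ∑ j, m (Sum.inl j) = a) (hB : ∑ j, m (Sum.inr j) = b)
    (i : Fin (n1+1)) (ib : Fin (n2+1)) (hib : (ib : ℕ) = (i : ℕ)) :
    (∃ u, (Sum.elim Fin.val Fin.val u ≠ (i:ℕ)) ∧
      ∃ v, (Sum.elim Fin.val Fin.val v ≠ (i:ℕ)) ∧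
      Finsupp.single u 1 + Finsupp.single v 1 ≤ m)
    ↔ m (Sum.inl i) + m (Sum.inr ib) ≤ 1 := by
  classical
  set F := Finset.univ.filter
    (fun w : Fin (n1+1) ⊕ Fin (n2+1) => Sum.elim Fin.val Fin.val w ≠ (i:ℕ)) with hF
  have htotal : ∑ w : Fin (n1+1) ⊕ Fin (n2+1), m w = 3 := by
    rw [Fintype.sum_sum_type]; omega
  have hFc : Finset.univ.filter
      (fun w : Fin (n1+1) ⊕ Fin (n2+1) => ¬ (Sum.elim Fin.val Fin.val w ≠ (i:ℕ)))
      = {Sum.inl i, Sum.inr ib} := by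
    ext w
    cases w with
    | inl j =>
      simp only [Finset.mem_filter, Finset.mem_univ, true_and, not_not, Sum.elim_inl,
        Finset.mem_insert, Finset.mem_singleton, Sum.inl.injEq, reduceCtorEq, or_false]
      exact ⟨fun h => Fin.ext h, fun h => by rw [h]⟩
    | inr j =>
      simp only [Finset.mem_filter, Finset.mem_univ, true_and, not_not, Sum.elim_inr,
        Finset.mem_insert, Finset.mem_singleton, Sum.inr.injEq, reduceCtorEq, false_or]
      exact ⟨fun h => Fin.ext (h.trans hib.symm), fun h => by rw [h]; exact hib⟩
  have hsplit : (∑ w ∈ F, m w) + (m (Sum.inl i) + m (Sum.inr ib)) = 3 := by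
    have h1 : (∑ w ∈ F, m w) + (∑ w ∈ Finset.univ.filter
        (fun w : Fin (n1+1) ⊕ Fin (n2+1) => ¬ (Sum.elim Fin.val Fin.val w ≠ (i:ℕ))), m w)
        = ∑ w : Fin (n1+1) ⊕ Fin (n2+1), m w :=
      Finset.sum_filter_add_sum_filter_not Finset.univ _ _
    rw [hFc, Finset.sum_pair
      (by simp : (Sum.inl i : Fin (n1+1) ⊕ Fin (n2+1)) ≠ Sum.inr ib)] at h1
    omega
  constructor
  · rintro ⟨u, hu, v, hv, hle⟩
    have hle' := Finsupp.le_def.mp hle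
    by_cases huv : u = v
    · subst huv
      have h2 : 2 ≤ m u := by
        have := hle' u
        simpa [Finsupp.single_apply] using this
      have hmem : u ∈ F := Finset.mem_filter.mpr ⟨Finset.mem_univ u, hu⟩
      have h3 : m u ≤ ∑ w ∈ F, m w :=
        Finset.single_le_sum (f := fun w => m w) (fun w _ => Nat.zero_le _) hmem
      omega
    · have h1 : 1 ≤ m u := by
        have := hle' u
        simp [Finsupp.single_apply, huv] at this
        omega
      have h2 : 1 ≤ m v := by
        have := hle' v
        simp [Finsupp.single_apply, huv, Ne.symm huv] at this
        omega
      have hsub : ({u, v} : Finset _) ⊆ F := by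
        intro w hw
        rcases Finset.mem_insert.mp hw with rfl | hw
        · exact Finset.mem_filter.mpr ⟨Finset.mem_univ _, hu⟩
        · rcases Finset.mem_singleton.mp hw with rfl
          exact Finset.mem_filter.mpr ⟨Finset.mem_univ _, hv⟩
      have h3 : ∑ w ∈ ({u, v} : Finset _), m w ≤ ∑ w ∈ F, m w :=
        Finset.sum_le_sum_of_subset hsub
      rw [Finset.sum_pair huv] at h3
      omega
  · intro hkey
    have hs : 2 ≤ ∑ w ∈ F, m w := by omega
    have hex : ∃ u ∈ F, 1 ≤ m u := by
      by_contra hc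
      push_neg at hc
      have : ∑ w ∈ F, m w = 0 := Finset.sum_eq_zero (fun w hw => by have := hc w hw; omega)
      omega
    obtain ⟨u, huF, hmu⟩ := hex
    have hu := (Finset.mem_filter.mp huF).2
    by_cases h2 : 2 ≤ m u
    · refine ⟨u, hu, u, hu, Finsupp.le_def.mpr (fun w => ?_)⟩
      by_cases hw : u = w
      · subst hw; simpa [Finsupp.single_apply] using h2
      · simp [Finsupp.single_apply, hw]
    · have herase : m u + ∑ w ∈ F.erase u, m w = ∑ w ∈ F, m w :=
        Finset.add_sum_erase _ _ huF
      have hex2 : ∃ v ∈ F.erase u, 1 ≤ m v := by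
        by_contra hc
        push_neg at hc
        have : ∑ w ∈ F.erase u, m w = 0 :=
          Finset.sum_eq_zero (fun w hw => by have := hc w hw; omega)
        omega
      obtain ⟨v, hvF, hmv⟩ := hex2
      have hvu : v ≠ u := (Finset.mem_erase.mp hvF).1
      have hv := (Finset.mem_filter.mp (Finset.mem_erase.mp hvF).2).2
      refine ⟨u, hu, v, hv, Finsupp.le_def.mpr (fun w => ?_)⟩
      by_cases hwu : u = w
      · subst hwu
        simp [Finsupp.single_apply, hvu]
        omega
      · by_cases hwv : v = w
        · subst hwv
          simp [Finsupp.single_apply, hwu]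
          omega
        · simp [Finsupp.single_apply, hwu, hwv]

lemma sum_single_ll {N M : ℕ} (i : Fin N) (c : ℕ) :
    ∑ j : Fin N, (Finsupp.single (Sum.inl i : Fin N ⊕ Fin M) c) (Sum.inl j) = c := by
  simp [Finsupp.single_apply]

lemma sum_single_rl {N M : ℕ} (r : Fin M) (c : ℕ) :
    ∑ j : Fin N, (Finsupp.single (Sum.inr r : Fin N ⊕ Fin M) c) (Sum.inl j) = 0 := by
  simp [Finsupp.single_apply]

lemma sum_single_lr {N M : ℕ} (i : Fin N) (c : ℕ) :
    ∑ j : Fin M, (Finsupp.single (Sum.inl i : Fin N ⊕ Fin M) c) (Sum.inr j) = 0 := by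
  simp [Finsupp.single_apply]

lemma sum_single_rr {N M : ℕ} (r : Fin M) (c : ℕ) :
    ∑ j : Fin M, (Finsupp.single (Sum.inr r : Fin N ⊕ Fin M) c) (Sum.inr j) = c := by
  simp [Finsupp.single_apply]

lemma card_ne_filter (N : ℕ) :
    (Finset.univ.filter (fun p : Fin (N+1) × Fin (N+1) => p.1 ≠ p.2)).card = (N+1) * N := by
  classical
  have hdiag : (Finset.univ.filter (fun p : Fin (N+1) × Fin (N+1) => p.1 = p.2))
      = Finset.univ.image (fun i : Fin (N+1) => (i, i)) := by
    ext ⟨x, y⟩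
    simp only [Finset.mem_filter, Finset.mem_univ, true_and, Finset.mem_image, Prod.mk.injEq]
    constructor
    · rintro rfl; exact ⟨x, rfl, rfl⟩
    · rintro ⟨i, rfl, rfl⟩; rfl
  have h1 := Finset.card_filter_add_card_filter_not
    (s := (Finset.univ : Finset (Fin (N+1) × Fin (N+1))))
    (fun p : Fin (N+1) × Fin (N+1) => p.1 = p.2)
  have h2 : (Finset.univ.filter (fun p : Fin (N+1) × Fin (N+1) => p.1 = p.2)).card = N+1 := by
    rw [hdiag, Finset.card_image_of_injective _ (fun a b h => (Prod.mk.injEq _ _ _ _ ▸ h).1),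
      Finset.card_univ, Fintype.card_fin]
  have h3 : (Finset.univ : Finset (Fin (N+1) × Fin (N+1))).card = (N+1) * (N+1) := by
    rw [Finset.card_univ, Fintype.card_prod, Fintype.card_fin]
  have h4 : (N+1) * (N+1) = (N+1) + (N+1) * N := by ring
  have h5 : (Finset.univ.filter (fun p : Fin (N+1) × Fin (N+1) => ¬ p.1 = p.2)).card
      = (N+1) * N := by omega
  exact h5

lemma class21 {n1 n2 : ℕ} (h' : n1 + 1 ≤ n2 + 1)
    (m : (Fin (n1+1) ⊕ Fin (n2+1)) →₀ ℕ)
    (hA : ∑ j, m (Sum.inl j) = 2) (hB : ∑ j, m (Sum.inr j) = 1) :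
    (∃ i : Fin (n1+1), 2 ≤ m (Sum.inl i) + m (Sum.inr (Fin.castLE h' i)))
    ↔ ((∃ i j : Fin (n1 + 1), i ≠ j ∧ ∃ l : Fin (n1 + 1), (l = i ∨ l = j) ∧
          m = Finsupp.single (Sum.inl i) 1 + Finsupp.single (Sum.inl j) 1 +
            Finsupp.single (Sum.inr (Fin.castLE h' l)) 1)
        ∨ (∃ (i : Fin (n1 + 1)) (j : Fin (n2 + 1)),
          m = Finsupp.single (Sum.inl i) 2 + Finsupp.single (Sum.inr j) 1)) := by
  obtain ⟨a, b, hab⟩ := sum_eq_two_exists hA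
  obtain ⟨c, hc⟩ := sum_eq_one_exists hB
  constructor
  · rintro ⟨i, hi⟩
    have hmi := hab i
    have hci := hc (Fin.castLE h' i)
    have hci' : m (Sum.inr (Fin.castLE h' i)) ≤ 1 := by
      rw [hci]; split_ifs <;> omega
    by_cases h2 : 2 ≤ m (Sum.inl i)
    · -- i = a = b, second form
      have hiab : i = a ∧ i = b := by
        split_ifs at hmi with h1 hb2 hb2
        · exact ⟨h1, hb2⟩
        all_goals omega
      right
      refine ⟨i, c, ?_⟩
      ext w
      cases w with
      | inl w =>
        rw [hab w]
        simp only [Finsupp.coe_add, Pi.add_apply, Finsupp.single_apply,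
          Sum.inl.injEq, reduceCtorEq, if_false, add_zero]
        rw [← hiab.1, ← hiab.2, ite_comm_eq w i]
        split_ifs <;> omega
      | inr w =>
        rw [hc w]
        simp only [Finsupp.coe_add, Pi.add_apply, Finsupp.single_apply,
          Sum.inr.injEq, reduceCtorEq, if_false, zero_add]
        rw [ite_comm_eq w c]
    · -- m (inl i) = 1 and m (inr ī) ≥ 1, so ī = c and i ∈ {a,b}, a ≠ b
      have hm1 : m (Sum.inl i) = 1 ∧ 1 ≤ m (Sum.inr (Fin.castLE h' i)) :=
        ⟨by omega, by omega⟩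
      have hcc : Fin.castLE h' i = c := by
        by_contra hcon
        rw [if_neg hcon] at hci
        omega
      have hior : (i = a ∧ i ≠ b) ∨ (i = b ∧ i ≠ a) := by
        have h1 := hm1.1
        rw [hmi] at h1
        split_ifs at h1 with ha1 hb1 hb1
        · omega
        · exact Or.inl ⟨ha1, fun h => hb1 h⟩
        · exact Or.inr ⟨hb1, fun h => ha1 h⟩
        · omega
      left
      have hmeq : ∀ (x y : Fin (n1+1)), x = a → y = b →
          m = Finsupp.single (Sum.inl a) 1 + Finsupp.single (Sum.inl b) 1 +
            Finsupp.single (Sum.inr (Fin.castLE h' i)) 1 := by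
        intro _ _ _ _
        ext w
        cases w with
        | inl w =>
          rw [hab w]
          simp only [Finsupp.coe_add, Pi.add_apply, Finsupp.single_apply,
            Sum.inl.injEq, Sum.inr.injEq, reduceCtorEq, if_false, add_zero]
          rw [ite_comm_eq w a, ite_comm_eq w b]
        | inr w =>
          rw [hc w]
          simp only [Finsupp.coe_add, Pi.add_apply, Finsupp.single_apply,
            Sum.inl.injEq, Sum.inr.injEq, reduceCtorEq, if_false, zero_add]
          rw [← hcc, ite_comm_eq w (Fin.castLE h' i)]
      rcases hior with ⟨hia, hnb⟩ | ⟨hib, hna⟩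
      · refine ⟨a, b, ?_, i, Or.inl hia, hmeq a b rfl rfl⟩
        intro h; exact hnb (hia.trans h)
      · refine ⟨a, b, ?_, i, Or.inr hib, hmeq a b rfl rfl⟩
        intro h; exact hna (hib.trans h.symm)
  · rintro (⟨i, j, hij, l, hl, rfl⟩ | ⟨i, j, rfl⟩)
    · refine ⟨l, ?_⟩
      rcases hl with rfl | rfl
      · simp [Finsupp.single_apply, hij]
      · simp [Finsupp.single_apply, Ne.symm hij]
    · refine ⟨i, ?_⟩
      simp [Finsupp.single_apply]
      try omega

end AuxStatement14

open MvPolynomial in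
/-- The computation in the proof of Proposition 3.2: in the bigraded coordinate ring of
`P^{n_1} × P^{n_2}` (`1 ≤ n_1 ≤ n_2`), for the ideal `I = ℘_0^2 ∩ ⋯ ∩ ℘_{n_1}^2` of the
scheme of 2-fat points supported at the diagonal pairs of coordinate points, the Hilbert
function in bidegrees `(1,2)` and `(2,1)` equals `(n_1+1)(n_1+n_2+1)`, the monomials of
those bidegrees not lying in `I` being exactly the ones listed. -/
theorem statement_14 (k : Type) [Field k] (n1 n2 : ℕ) (h1 : 1 ≤ n1) (h12 : n1 ≤ n2)
    (P : Fin (n1 + 1) → Ideal (MvPolynomial (Fin (n1 + 1) ⊕ Fin (n2 + 1)) k))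
    (hP : P = fun i : Fin (n1 + 1) => Ideal.span
      ({f | ∃ j : Fin (n1 + 1), (j : ℕ) ≠ (i : ℕ) ∧ f = X (Sum.inl j)} ∪
       {f | ∃ j : Fin (n2 + 1), (j : ℕ) ≠ (i : ℕ) ∧ f = X (Sum.inr j)}))
    (I : Ideal (MvPolynomial (Fin (n1 + 1) ⊕ Fin (n2 + 1)) k)) (hI : I = ⨅ i, (P i) ^ 2)
    (bi : ℕ → ℕ → Submodule k (MvPolynomial (Fin (n1 + 1) ⊕ Fin (n2 + 1)) k))
    (hbi : bi = fun a b => Submodule.span k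
      {f | ∃ m : (Fin (n1 + 1) ⊕ Fin (n2 + 1)) →₀ ℕ,
        (∑ j, m (Sum.inl j)) = a ∧ (∑ j, m (Sum.inr j)) = b ∧ f = monomial m 1}) :
    (Module.finrank k (bi 1 2) -
        Module.finrank k ↥(Submodule.restrictScalars k I ⊓ bi 1 2)
      = (n1 + 1) * (n1 + n2 + 1)) ∧
    (Module.finrank k (bi 2 1) -
        Module.finrank k ↥(Submodule.restrictScalars k I ⊓ bi 2 1)
      = (n1 + 1) * (n1 + n2 + 1)) ∧
    ({m : (Fin (n1 + 1) ⊕ Fin (n2 + 1)) →₀ ℕ |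
        (∑ j, m (Sum.inl j)) = 1 ∧ (∑ j, m (Sum.inr j)) = 2 ∧ monomial m (1 : k) ∉ I}
      = {m | ∃ (i : Fin (n1 + 1)) (j : Fin (n2 + 1)),
          m = Finsupp.single (Sum.inl i) 1 +
            Finsupp.single (Sum.inr (Fin.castLE (by omega) i)) 1 +
            Finsupp.single (Sum.inr j) 1}
        ∪ {m | ∃ i j : Fin (n1 + 1), i ≠ j ∧
          m = Finsupp.single (Sum.inl i) 1 +
            Finsupp.single (Sum.inr (Fin.castLE (by omega) j)) 2}) ∧
    ({m : (Fin (n1 + 1) ⊕ Fin (n2 + 1)) →₀ ℕ |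
        (∑ j, m (Sum.inl j)) = 2 ∧ (∑ j, m (Sum.inr j)) = 1 ∧ monomial m (1 : k) ∉ I}
      = {m | ∃ i j : Fin (n1 + 1), i ≠ j ∧ ∃ l : Fin (n1 + 1), (l = i ∨ l = j) ∧
          m = Finsupp.single (Sum.inl i) 1 + Finsupp.single (Sum.inl j) 1 +
            Finsupp.single (Sum.inr (Fin.castLE (by omega) l)) 1}
        ∪ {m | ∃ (i : Fin (n1 + 1)) (j : Fin (n2 + 1)),
          m = Finsupp.single (Sum.inl i) 2 + Finsupp.single (Sum.inr j) 1}) := by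
  classical
  have h' : n1 + 1 ≤ n2 + 1 := by omega
  have hQf : ∀ f : MvPolynomial (Fin (n1 + 1) ⊕ Fin (n2 + 1)) k, f ∈ I ↔
      ∀ m ∈ f.support, ∀ i : Fin (n1+1),
        ∃ u, (Sum.elim Fin.val Fin.val u ≠ (i:ℕ)) ∧
        ∃ v, (Sum.elim Fin.val Fin.val v ≠ (i:ℕ)) ∧
        Finsupp.single u 1 + Finsupp.single v 1 ≤ m :=
    mem_I_iff P hP I hI
  have hQmono : ∀ mm : (Fin (n1+1) ⊕ Fin (n2+1)) →₀ ℕ,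
      (monomial mm (1:k) ∈ I ↔ ∀ i : Fin (n1+1),
        ∃ u, (Sum.elim Fin.val Fin.val u ≠ (i:ℕ)) ∧
        ∃ v, (Sum.elim Fin.val Fin.val v ≠ (i:ℕ)) ∧
        Finsupp.single u 1 + Finsupp.single v 1 ≤ mm) := by
    intro mm
    rw [hQf]
    constructor
    · intro h
      refine h mm ?_
      rw [mem_support_iff, coeff_monomial, if_pos rfl]
      exact one_ne_zero
    · intro h m' hm'
      rcases Finset.mem_singleton.mp (support_monomial_subset hm') with rfl
      exact h
  have hnotI_iff : ∀ (mm : (Fin (n1+1) ⊕ Fin (n2+1)) →₀ ℕ) (a b : ℕ), a + b = 3 →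
      (∑ j, mm (Sum.inl j)) = a → (∑ j, mm (Sum.inr j)) = b →
      ((monomial mm (1:k) ∉ I) ↔
        ∃ i : Fin (n1+1), 2 ≤ mm (Sum.inl i) + mm (Sum.inr (Fin.castLE h' i))) := by
    intro mm a b h3 hA hB
    rw [not_congr (hQmono mm), not_forall]
    apply exists_congr
    intro i
    have hk := key_iff mm h3 hA hB i (Fin.castLE h' i) rfl
    constructor
    · intro hni
      by_contra hc
      exact hni (hk.mpr (by omega))
    · intro h2 hEx
      have := hk.mp hEx
      omega
  -- finiteness of graded pieces
  have hfinT : ∀ (a b : ℕ), a ≤ 3 → b ≤ 3 →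
      ({m : (Fin (n1+1) ⊕ Fin (n2+1)) →₀ ℕ |
        (∑ j, m (Sum.inl j)) = a ∧ (∑ j, m (Sum.inr j)) = b}).Finite := by
    intro a b ha hb
    apply Set.Finite.subset (Set.finite_Iic
      (Finsupp.equivFunOnFinite.symm (fun _ : Fin (n1+1) ⊕ Fin (n2+1) => 3)))
    rintro m ⟨hA, hB⟩
    rw [Set.mem_Iic, Finsupp.le_def]
    intro w
    have hw : (Finsupp.equivFunOnFinite.symm
        (fun _ : Fin (n1+1) ⊕ Fin (n2+1) => 3)) w = 3 := rfl
    rw [hw]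
    cases w with
    | inl j =>
      have hle : m (Sum.inl j) ≤ ∑ j' : Fin (n1+1), m (Sum.inl j') :=
        Finset.single_le_sum (f := fun j => m (Sum.inl j))
          (fun _ _ => Nat.zero_le _) (Finset.mem_univ j)
      omega
    | inr j =>
      have hle : m (Sum.inr j) ≤ ∑ j' : Fin (n2+1), m (Sum.inr j') :=
        Finset.single_le_sum (f := fun j => m (Sum.inr j))
          (fun _ _ => Nat.zero_le _) (Finset.mem_univ j)
      omega
  -- bi as span of monomial image
  have hbiT : ∀ a b : ℕ, bi a b = Submodule.span k ((fun m => monomial m (1:k)) ''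
      {m : (Fin (n1+1) ⊕ Fin (n2+1)) →₀ ℕ |
        (∑ j, m (Sum.inl j)) = a ∧ (∑ j, m (Sum.inr j)) = b}) := by
    intro a b
    have h0 : bi a b = Submodule.span k
        {f | ∃ m : (Fin (n1 + 1) ⊕ Fin (n2 + 1)) →₀ ℕ,
          (∑ j, m (Sum.inl j)) = a ∧ (∑ j, m (Sum.inr j)) = b ∧ f = monomial m 1} := by
      rw [hbi]
    rw [h0]
    congr 1
    ext f
    simp only [Set.mem_setOf_eq, Set.mem_image]
    constructor
    · rintro ⟨m, hA, hB, rfl⟩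
      exact ⟨m, ⟨hA, hB⟩, rfl⟩
    · rintro ⟨m, ⟨hA, hB⟩, rfl⟩
      exact ⟨m, hA, hB, rfl⟩
  -- the finsets of monomials not in I
  set B12 : Finset ((Fin (n1+1) ⊕ Fin (n2+1)) →₀ ℕ) :=
    (Finset.univ.image (fun p : Fin (n1+1) × Fin (n2+1) =>
      Finsupp.single (Sum.inl p.1) 1 + Finsupp.single (Sum.inr (Fin.castLE h' p.1)) 1 +
        Finsupp.single (Sum.inr p.2) 1)) ∪
    ((Finset.univ.filter (fun p : Fin (n1+1) × Fin (n1+1) => p.1 ≠ p.2)).image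
      (fun p => Finsupp.single (Sum.inl p.1) 1 +
        Finsupp.single (Sum.inr (Fin.castLE h' p.2)) 2)) with hB12def
  set B21 : Finset ((Fin (n1+1) ⊕ Fin (n2+1)) →₀ ℕ) :=
    (((Finset.univ.filter (fun p : Fin (n1+1) × Fin (n1+1) => p.1 ≠ p.2)).image
      (fun p => Finsupp.single (Sum.inl p.1) 1 + Finsupp.single (Sum.inl p.2) 1 +
        Finsupp.single (Sum.inr (Fin.castLE h' p.1)) 1))) ∪
    (Finset.univ.image (fun p : Fin (n1+1) × Fin (n2+1) =>
      Finsupp.single (Sum.inl p.1) 2 + Finsupp.single (Sum.inr p.2) 1)) with hB21def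
  have hB12mem : ∀ mm, mm ∈ B12 ↔
      ((∃ (i : Fin (n1+1)) (j : Fin (n2+1)), mm = Finsupp.single (Sum.inl i) 1 +
          Finsupp.single (Sum.inr (Fin.castLE h' i)) 1 + Finsupp.single (Sum.inr j) 1) ∨
       (∃ i j : Fin (n1+1), i ≠ j ∧ mm = Finsupp.single (Sum.inl i) 1 +
          Finsupp.single (Sum.inr (Fin.castLE h' j)) 2)) := by
    intro mm
    rw [hB12def]
    simp only [Finset.mem_union, Finset.mem_image, Finset.mem_filter, Finset.mem_univ,
      true_and, Prod.exists]
    constructor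
    · rintro (⟨a, b, hab⟩ | ⟨a, b, hne, hab⟩)
      · exact Or.inl ⟨a, b, hab.symm⟩
      · exact Or.inr ⟨a, b, hne, hab.symm⟩
    · rintro (⟨a, b, hab⟩ | ⟨a, b, hne, hab⟩)
      · exact Or.inl ⟨a, b, hab.symm⟩
      · exact Or.inr ⟨a, b, hne, hab.symm⟩
  have hB21mem : ∀ mm, mm ∈ B21 ↔
      ((∃ i j : Fin (n1+1), i ≠ j ∧ ∃ l : Fin (n1+1), (l = i ∨ l = j) ∧
          mm = Finsupp.single (Sum.inl i) 1 + Finsupp.single (Sum.inl j) 1 +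
            Finsupp.single (Sum.inr (Fin.castLE h' l)) 1) ∨
       (∃ (i : Fin (n1+1)) (j : Fin (n2+1)),
          mm = Finsupp.single (Sum.inl i) 2 + Finsupp.single (Sum.inr j) 1)) := by
    intro mm
    rw [hB21def]
    simp only [Finset.mem_union, Finset.mem_image, Finset.mem_filter, Finset.mem_univ,
      true_and, Prod.exists]
    constructor
    · rintro (⟨a, b, hne, hab⟩ | ⟨a, b, hab⟩)
      · exact Or.inl ⟨a, b, hne, a, Or.inl rfl, hab.symm⟩
      · exact Or.inr ⟨a, b, hab.symm⟩
    · rintro (⟨a, b, hne, l, hl, hab⟩ | ⟨a, b, hab⟩)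
      · rcases hl with rfl | rfl
        · exact Or.inl ⟨l, b, hne, hab.symm⟩
        · refine Or.inl ⟨l, a, Ne.symm hne, ?_⟩
          rw [hab, add_comm (Finsupp.single (Sum.inl a) 1) (Finsupp.single (Sum.inl l) 1)]
      · exact Or.inr ⟨a, b, hab.symm⟩
  -- degree computations
  have hdeg12 : ∀ mm : (Fin (n1+1) ⊕ Fin (n2+1)) →₀ ℕ,
      ((∃ (i : Fin (n1+1)) (j : Fin (n2+1)), mm = Finsupp.single (Sum.inl i) 1 +
          Finsupp.single (Sum.inr (Fin.castLE h' i)) 1 + Finsupp.single (Sum.inr j) 1) ∨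
       (∃ i j : Fin (n1+1), i ≠ j ∧ mm = Finsupp.single (Sum.inl i) 1 +
          Finsupp.single (Sum.inr (Fin.castLE h' j)) 2)) →
      (∑ j, mm (Sum.inl j)) = 1 ∧ (∑ j, mm (Sum.inr j)) = 2 := by
    rintro mm (⟨i, j, rfl⟩ | ⟨i, j, hij, rfl⟩) <;>
      exact ⟨by simp [Finsupp.add_apply, Finset.sum_add_distrib, sum_single_ll,
          sum_single_rl, sum_single_lr, sum_single_rr],
        by simp [Finsupp.add_apply, Finset.sum_add_distrib, sum_single_ll,
          sum_single_rl, sum_single_lr, sum_single_rr]⟩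
  have hdeg21 : ∀ mm : (Fin (n1+1) ⊕ Fin (n2+1)) →₀ ℕ,
      ((∃ i j : Fin (n1+1), i ≠ j ∧ ∃ l : Fin (n1+1), (l = i ∨ l = j) ∧
          mm = Finsupp.single (Sum.inl i) 1 + Finsupp.single (Sum.inl j) 1 +
            Finsupp.single (Sum.inr (Fin.castLE h' l)) 1) ∨
       (∃ (i : Fin (n1+1)) (j : Fin (n2+1)),
          mm = Finsupp.single (Sum.inl i) 2 + Finsupp.single (Sum.inr j) 1)) →
      (∑ j, mm (Sum.inl j)) = 2 ∧ (∑ j, mm (Sum.inr j)) = 1 := by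
    rintro mm (⟨i, j, hij, l, hl, rfl⟩ | ⟨i, j, rfl⟩) <;>
      exact ⟨by simp [Finsupp.add_apply, Finset.sum_add_distrib, sum_single_ll,
          sum_single_rl, sum_single_lr, sum_single_rr],
        by simp [Finsupp.add_apply, Finset.sum_add_distrib, sum_single_ll,
          sum_single_rl, sum_single_lr, sum_single_rr]⟩
  -- the iff characterizations on the graded pieces
  have hBiff12 : ∀ mm ∈ {m : (Fin (n1+1) ⊕ Fin (n2+1)) →₀ ℕ |
      (∑ j, m (Sum.inl j)) = 1 ∧ (∑ j, m (Sum.inr j)) = 2},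
      (¬ (∀ i : Fin (n1+1),
        ∃ u, (Sum.elim Fin.val Fin.val u ≠ (i:ℕ)) ∧
        ∃ v, (Sum.elim Fin.val Fin.val v ≠ (i:ℕ)) ∧
        Finsupp.single u 1 + Finsupp.single v 1 ≤ mm) ↔ mm ∈ B12) := by
    intro mm hmm
    exact ((not_congr (hQmono mm)).symm.trans
      ((hnotI_iff mm 1 2 rfl hmm.1 hmm.2).trans
        ((class12 h' mm hmm.1 hmm.2).trans (hB12mem mm).symm)))
  have hBiff21 : ∀ mm ∈ {m : (Fin (n1+1) ⊕ Fin (n2+1)) →₀ ℕ |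
      (∑ j, m (Sum.inl j)) = 2 ∧ (∑ j, m (Sum.inr j)) = 1},
      (¬ (∀ i : Fin (n1+1),
        ∃ u, (Sum.elim Fin.val Fin.val u ≠ (i:ℕ)) ∧
        ∃ v, (Sum.elim Fin.val Fin.val v ≠ (i:ℕ)) ∧
        Finsupp.single u 1 + Finsupp.single v 1 ≤ mm) ↔ mm ∈ B21) := by
    intro mm hmm
    exact ((not_congr (hQmono mm)).symm.trans
      ((hnotI_iff mm 2 1 rfl hmm.1 hmm.2).trans
        ((class21 h' mm hmm.1 hmm.2).trans (hB21mem mm).symm)))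
  -- the rank computations
  have hrk12 : Module.finrank k (bi 1 2) -
      Module.finrank k ↥(Submodule.restrictScalars k I ⊓ bi 1 2) = B12.card := by
    rw [hbiT 1 2]
    exact finrank_piece k _ (hfinT 1 2 (by omega) (by omega)) I _ hQf B12
      (fun mm hm => hdeg12 mm ((hB12mem mm).mp hm)) hBiff12
  have hrk21 : Module.finrank k (bi 2 1) -
      Module.finrank k ↥(Submodule.restrictScalars k I ⊓ bi 2 1) = B21.card := by
    rw [hbiT 2 1]
    exact finrank_piece k _ (hfinT 2 1 (by omega) (by omega)) I _ hQf B21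
      (fun mm hm => hdeg21 mm ((hB21mem mm).mp hm)) hBiff21
  -- cardinalities
  have hinj1 : Function.Injective (fun p : Fin (n1+1) × Fin (n2+1) =>
      Finsupp.single (Sum.inl p.1) 1 + Finsupp.single (Sum.inr (Fin.castLE h' p.1)) 1 +
        Finsupp.single (Sum.inr p.2) 1) := by
    rintro ⟨i1, j1⟩ ⟨i2, j2⟩ h
    simp only at h
    have hx := DFunLike.congr_fun h (Sum.inl i1)
    have hy := DFunLike.congr_fun h (Sum.inr j1)
    simp only [Finsupp.add_apply, Finsupp.single_apply, Sum.inl.injEq, Sum.inr.injEq,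
      reduceCtorEq, if_false, if_true, eq_self_iff_true, add_zero, zero_add] at hx hy
    have hii : i2 = i1 := by
      by_contra hne
      rw [if_neg hne] at hx
      omega
    subst hii
    have hjj : j2 = j1 := by
      by_contra hne
      rw [if_neg hne] at hy
      omega
    subst hjj
    rfl
  have hinj2 : Function.Injective (fun p : Fin (n1+1) × Fin (n1+1) =>
      Finsupp.single (Sum.inl p.1) 1 + Finsupp.single (Sum.inr (Fin.castLE h' p.2)) 2) := by
    rintro ⟨i1, j1⟩ ⟨i2, j2⟩ h
    simp only at h
    have hx := DFunLike.congr_fun h (Sum.inl i1)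
    have hy := DFunLike.congr_fun h (Sum.inr (Fin.castLE h' j1))
    simp only [Finsupp.add_apply, Finsupp.single_apply, Sum.inl.injEq, Sum.inr.injEq,
      reduceCtorEq, if_false, if_true, eq_self_iff_true, add_zero, zero_add] at hx hy
    have hii : i2 = i1 := by
      by_contra hne
      rw [if_neg hne] at hx
      omega
    subst hii
    have hjj : Fin.castLE h' j2 = Fin.castLE h' j1 := by
      by_contra hne
      rw [if_neg hne] at hy
      omega
    have h0 := congrArg Fin.val hjj
    have hjj' : j2 = j1 := Fin.ext h0
    subst hjj'
    rfl
  have hdisj12 : Disjoint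
      (Finset.univ.image (fun p : Fin (n1+1) × Fin (n2+1) =>
        Finsupp.single (Sum.inl p.1) 1 + Finsupp.single (Sum.inr (Fin.castLE h' p.1)) 1 +
          Finsupp.single (Sum.inr p.2) 1))
      ((Finset.univ.filter (fun p : Fin (n1+1) × Fin (n1+1) => p.1 ≠ p.2)).image
        (fun p => Finsupp.single (Sum.inl p.1) 1 +
          Finsupp.single (Sum.inr (Fin.castLE h' p.2)) 2)) := by
    rw [Finset.disjoint_left]
    intro mm hm1 hm2
    obtain ⟨p, -, hp⟩ := Finset.mem_image.mp hm1
    obtain ⟨q, hq, hq2⟩ := Finset.mem_image.mp hm2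
    have hqf : q.1 ≠ q.2 := (Finset.mem_filter.mp hq).2
    have h := hp.trans hq2.symm
    have hx := DFunLike.congr_fun h (Sum.inl p.1)
    have hy := DFunLike.congr_fun h (Sum.inr (Fin.castLE h' q.2))
    simp only [Finsupp.add_apply, Finsupp.single_apply, Sum.inl.injEq, Sum.inr.injEq,
      reduceCtorEq, if_false, if_true, eq_self_iff_true, add_zero, zero_add] at hx hy
    have hq1 : q.1 = p.1 := by
      by_contra hne
      rw [if_neg hne] at hx
      omega
    have hc : Fin.castLE h' p.1 = Fin.castLE h' q.2 := by
      by_contra hne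
      rw [if_neg hne] at hy
      split_ifs at hy <;> omega
    have h0 := congrArg Fin.val hc
    have hp1q2 : p.1 = q.2 := Fin.ext h0
    exact hqf (hq1.trans hp1q2)
  have hinj3 : Set.InjOn (fun p : Fin (n1+1) × Fin (n1+1) =>
      Finsupp.single (Sum.inl p.1) 1 + Finsupp.single (Sum.inl p.2) 1 +
        Finsupp.single (Sum.inr (Fin.castLE h' p.1)) 1)
      ((Finset.univ.filter (fun p : Fin (n1+1) × Fin (n1+1) => p.1 ≠ p.2)) : Finset _) := by
    rintro ⟨i1, j1⟩ hp ⟨i2, j2⟩ hq h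
    have hpf : i1 ≠ j1 := (Finset.mem_filter.mp hp).2
    have hqf : i2 ≠ j2 := (Finset.mem_filter.mp hq).2
    simp only at h
    have hx := DFunLike.congr_fun h (Sum.inr (Fin.castLE h' i1))
    simp only [Finsupp.add_apply, Finsupp.single_apply, Sum.inl.injEq, Sum.inr.injEq,
      reduceCtorEq, if_false, if_true, eq_self_iff_true, add_zero, zero_add] at hx
    have hc : Fin.castLE h' i2 = Fin.castLE h' i1 := by
      by_contra hne
      rw [if_neg hne] at hx
      omega
    have h0 := congrArg Fin.val hc
    have hii : i2 = i1 := Fin.ext h0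
    subst hii
    have hy := DFunLike.congr_fun h (Sum.inl j1)
    simp only [Finsupp.add_apply, Finsupp.single_apply, Sum.inl.injEq, Sum.inr.injEq,
      reduceCtorEq, if_false, if_true, eq_self_iff_true, add_zero, zero_add] at hy
    rw [if_neg hpf] at hy
    have hjj : j2 = j1 := by
      by_contra hne
      rw [if_neg hne] at hy
      omega
    subst hjj
    rfl
  have hinj4 : Function.Injective (fun p : Fin (n1+1) × Fin (n2+1) =>
      Finsupp.single (Sum.inl p.1) 2 + Finsupp.single (Sum.inr p.2) 1) := by
    rintro ⟨i1, j1⟩ ⟨i2, j2⟩ h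
    simp only at h
    have hx := DFunLike.congr_fun h (Sum.inl i1)
    have hy := DFunLike.congr_fun h (Sum.inr j1)
    simp only [Finsupp.add_apply, Finsupp.single_apply, Sum.inl.injEq, Sum.inr.injEq,
      reduceCtorEq, if_false, if_true, eq_self_iff_true, add_zero, zero_add] at hx hy
    have hii : i2 = i1 := by
      by_contra hne
      rw [if_neg hne] at hx
      omega
    subst hii
    have hjj : j2 = j1 := by
      by_contra hne
      rw [if_neg hne] at hy
      omega
    subst hjj
    rfl
  have hdisj21 : Disjoint
      (((Finset.univ.filter (fun p : Fin (n1+1) × Fin (n1+1) => p.1 ≠ p.2)).image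
        (fun p => Finsupp.single (Sum.inl p.1) 1 + Finsupp.single (Sum.inl p.2) 1 +
          Finsupp.single (Sum.inr (Fin.castLE h' p.1)) 1)))
      (Finset.univ.image (fun p : Fin (n1+1) × Fin (n2+1) =>
        Finsupp.single (Sum.inl p.1) 2 + Finsupp.single (Sum.inr p.2) 1)) := by
    rw [Finset.disjoint_left]
    intro mm hm1 hm2
    obtain ⟨p, hp, hp2⟩ := Finset.mem_image.mp hm1
    obtain ⟨q, -, hq2⟩ := Finset.mem_image.mp hm2
    have hpf : p.1 ≠ p.2 := (Finset.mem_filter.mp hp).2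
    have h := hp2.trans hq2.symm
    have hx := DFunLike.congr_fun h (Sum.inl q.1)
    simp only [Finsupp.add_apply, Finsupp.single_apply, Sum.inl.injEq, Sum.inr.injEq,
      reduceCtorEq, if_false, if_true, eq_self_iff_true, add_zero, zero_add] at hx
    have hc1 : p.1 = q.1 := by
      by_contra hne
      rw [if_neg hne] at hx
      split_ifs at hx <;> omega
    have hc2 : p.2 = q.1 := by
      rw [if_pos hc1] at hx
      by_contra hne
      rw [if_neg hne] at hx
      omega
    exact hpf (hc1.trans hc2.symm)
  have hcard12 : B12.card = (n1 + 1) * (n1 + n2 + 1) := by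
    rw [hB12def, Finset.card_union_of_disjoint hdisj12,
      Finset.card_image_of_injective _ hinj1, Finset.card_image_of_injective _ hinj2,
      Finset.card_univ, Fintype.card_prod, Fintype.card_fin, Fintype.card_fin,
      card_ne_filter n1]
    ring
  have hcard21 : B21.card = (n1 + 1) * (n1 + n2 + 1) := by
    rw [hB21def, Finset.card_union_of_disjoint hdisj21,
      Finset.card_image_of_injOn hinj3, Finset.card_image_of_injective _ hinj4,
      Finset.card_univ, Fintype.card_prod, Fintype.card_fin, Fintype.card_fin,
      card_ne_filter n1]
    ring
  refine ⟨hrk12.trans hcard12, hrk21.trans hcard21, ?_, ?_⟩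
  · ext mm
    simp only [Set.mem_setOf_eq, Set.mem_union]
    constructor
    · rintro ⟨hA, hB, hnot⟩
      exact (class12 h' mm hA hB).mp ((hnotI_iff mm 1 2 rfl hA hB).mp hnot)
    · intro h
      have h2 := hdeg12 mm h
      exact ⟨h2.1, h2.2, (hnotI_iff mm 1 2 rfl h2.1 h2.2).mpr
        ((class12 h' mm h2.1 h2.2).mpr h)⟩
  · ext mm
    simp only [Set.mem_setOf_eq, Set.mem_union]
    constructor
    · rintro ⟨hA, hB, hnot⟩
      exact (class21 h' mm hA hB).mp ((hnotI_iff mm 2 1 rfl hA hB).mp hnot)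
    · intro h
      have h2 := hdeg21 mm h
      exact ⟨h2.1, h2.2, (hnotI_iff mm 2 1 rfl h2.1 h2.2).mpr
        ((class21 h' mm h2.1 h2.2).mpr h)⟩
end
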